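/- arXiv:2207.07543 — 9 statements merged into one kernel-verified Lean document; each statement's English description precedes it below -/
import Mathlib

section
/- Let A : Matrix (Fin n) (Fin E) ℝ, and for each i : Fin n let f_i : ℝ → ℝ be convex, μ_i-strongly convex and M_i-smooth (differentiable with M_i-Lipschitz derivative), with 0 < μ_i ≤ M_i; set M_max = max_i M_i. Define the Fenchel conjugates f_i*(y) = ⨆_{x : ℝ} (y·x − f_i(x)) and F(λ) = Σ_{i} f_i*((A.mulVec λ)_i) for λ ∈ EuclideanSpace ℝ (Fin E). Let γ⁺_min be the smallest nonzero eigenvalue of AᵀA, let K be the range of the linear map y ↦ Aᵀ.mulVec y and P the orthogonal projection onto K. Then F is (γ⁺_min / M_max)-strongly convex with respect to the seminorm |x|_A := ‖P x‖: for all x, y and t ∈ [0,1], F(t•x+(1−t)•y) ≤ t·F(x) + (1−t)·F(y) − (γ⁺_min/(2·M_max))·t·(1−t)·|x−y|_A². -/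
open Matrix


lemma tangent_le {f : ℝ → ℝ} (hconv : ConvexOn ℝ Set.univ f) (hd : Differentiable ℝ f)
    (x₀ x : ℝ) : f x₀ + deriv f x₀ * (x - x₀) ≤ f x := by
  rcases lt_trichotomy x₀ x with h | rfl | h
  · have h1 := hconv.deriv_le_slope (Set.mem_univ x₀) (Set.mem_univ x) h (hd x₀)
    rw [slope_def_field] at h1
    have h2 : 0 < x - x₀ := by linarith
    have h3 := mul_le_mul_of_nonneg_right h1 h2.le
    rw [div_mul_cancel₀ _ h2.ne'] at h3
    linarith
  · simp
  · have h1 := hconv.slope_le_deriv (Set.mem_univ x) (Set.mem_univ x₀) h (hd x₀)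
    rw [slope_def_field] at h1
    have h2 : 0 < x₀ - x := by linarith
    have h3 := mul_le_mul_of_nonneg_right h1 h2.le
    rw [div_mul_cancel₀ _ h2.ne'] at h3
    nlinarith

lemma smooth_upper {f : ℝ → ℝ} {Mi : ℝ} (hM : 0 < Mi) (hd : Differentiable ℝ f)
    (hsm : LipschitzWith Mi.toNNReal (deriv f)) (y x : ℝ) :
    f x ≤ f y + deriv f y * (x - y) + Mi / 2 * (x - y) ^ 2 := by
  set g : ℝ → ℝ := fun z => Mi / 2 * z ^ 2 - f z with hg
  have hgd : Differentiable ℝ g := ((differentiable_pow 2).const_mul _).sub hd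
  have hgderiv : ∀ z, deriv g z = Mi * z - deriv f z := by
    intro z
    have h1 : HasDerivAt (fun z : ℝ => Mi / 2 * z ^ 2) (Mi * z) z := by
      have := (hasDerivAt_pow 2 z).const_mul (Mi / 2)
      refine this.congr_deriv ?_
      ring
    exact (h1.sub (hd z).hasDerivAt).deriv
  have hmono : Monotone (deriv g) := by
    intro p q hpq
    rw [hgderiv p, hgderiv q]
    have h1 := hsm.dist_le_mul p q
    rw [Real.dist_eq, Real.dist_eq, Real.coe_toNNReal _ hM.le] at h1
    have h3 : |p - q| = q - p := by rw [abs_sub_comm]; exact abs_of_nonneg (by linarith)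
    rw [h3] at h1
    have h2 := (abs_le.mp h1).1
    linarith
  have hgconv := hmono.convexOn_univ_of_deriv hgd
  have ht := tangent_le hgconv hgd y x
  rw [hgderiv y] at ht
  simp only [hg] at ht
  nlinarith [ht]

lemma strong_lower {f : ℝ → ℝ} {μ : ℝ}
    (hstrong : ConvexOn ℝ Set.univ fun x => f x - μ / 2 * x ^ 2)
    (hd : Differentiable ℝ f) (y x : ℝ) :
    f y + deriv f y * (x - y) + μ / 2 * (x - y) ^ 2 ≤ f x := by
  set h : ℝ → ℝ := fun z => f z - μ / 2 * z ^ 2 with hh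
  have hhd : Differentiable ℝ h := hd.sub ((differentiable_pow 2).const_mul _)
  have hderiv : ∀ z, deriv h z = deriv f z - μ * z := by
    intro z
    have h1 : HasDerivAt (fun z : ℝ => μ / 2 * z ^ 2) (μ * z) z := by
      have := (hasDerivAt_pow 2 z).const_mul (μ / 2)
      refine this.congr_deriv ?_
      ring
    exact ((hd z).hasDerivAt.sub h1).deriv
  have ht := tangent_le hstrong hhd y x
  rw [hderiv y] at ht
  simp only [hh] at ht
  nlinarith [ht]

lemma deriv_surj {f : ℝ → ℝ} {μ Mi : ℝ} (hμ : 0 < μ)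
    (hstrong : ConvexOn ℝ Set.univ fun x => f x - μ / 2 * x ^ 2)
    (hd : Differentiable ℝ f) (hsm : LipschitzWith Mi.toNNReal (deriv f)) (c : ℝ) :
    ∃ x, deriv f x = c := by
  have hcont : Continuous (deriv f) := hsm.continuous
  set h : ℝ → ℝ := fun z => f z - μ / 2 * z ^ 2 with hh
  have hhd : Differentiable ℝ h := hd.sub ((differentiable_pow 2).const_mul _)
  have hderiv : ∀ z, deriv h z = deriv f z - μ * z := by
    intro z
    have h1 : HasDerivAt (fun z : ℝ => μ / 2 * z ^ 2) (μ * z) z := by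
      have := (hasDerivAt_pow 2 z).const_mul (μ / 2)
      refine this.congr_deriv ?_
      ring
    exact ((hd z).hasDerivAt.sub h1).deriv
  have hmono : MonotoneOn (deriv h) Set.univ :=
    hstrong.monotoneOn_deriv (fun x _ => hhd x)
  have hgrow' : ∀ z, 0 ≤ z → deriv f 0 + μ * z ≤ deriv f z := by
    intro z hz
    have := hmono (Set.mem_univ 0) (Set.mem_univ z) hz
    rw [hderiv 0, hderiv z] at this
    linarith
  have hgrow'' : ∀ z, z ≤ 0 → deriv f z ≤ deriv f 0 + μ * z := by
    intro z hz
    have := hmono (Set.mem_univ z) (Set.mem_univ 0) hz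
    rw [hderiv 0, hderiv z] at this
    linarith
  set q := (c - deriv f 0) / μ with hq
  have hqc : deriv f 0 + μ * q = c := by rw [hq]; field_simp; ring
  set b := max 0 q with hb
  set a := min 0 q with ha
  have hfb : c ≤ deriv f b := by
    have h1 := hgrow' b (le_max_left _ _)
    have h2 : q ≤ b := le_max_right _ _
    nlinarith
  have hfa : deriv f a ≤ c := by
    have h1 := hgrow'' a (min_le_left _ _)
    have h2 : a ≤ q := min_le_right _ _
    nlinarith
  exact intermediate_value_univ a b hcont ⟨hfa, hfb⟩

lemma conj_strong_ineq {f : ℝ → ℝ} {μ Mi : ℝ} (hμ : 0 < μ) (hμM : μ ≤ Mi)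
    (hconv : ConvexOn ℝ Set.univ f)
    (hstrong : ConvexOn ℝ Set.univ fun x => f x - μ / 2 * x ^ 2)
    (hd : Differentiable ℝ f) (hsm : LipschitzWith Mi.toNNReal (deriv f))
    (a b t : ℝ) (ht0 : 0 ≤ t) (ht1 : t ≤ 1) :
    (⨆ x, ((t * a + (1 - t) * b) * x - f x)) ≤
      t * (⨆ x, (a * x - f x)) + (1 - t) * (⨆ x, (b * x - f x))
        - 1 / (2 * Mi) * (t * (1 - t) * (a - b) ^ 2) := by
  have hM : 0 < Mi := lt_of_lt_of_le hμ hμM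
  have hbdd : ∀ z : ℝ, BddAbove (Set.range fun x => z * x - f x) := by
    intro z
    refine ⟨(z - deriv f 0) ^ 2 / (2 * μ) - f 0, ?_⟩
    rintro _ ⟨x, rfl⟩
    have h1 := strong_lower hstrong hd 0 x
    have h2 : (z - deriv f 0) * x - μ / 2 * x ^ 2 ≤ (z - deriv f 0) ^ 2 / (2 * μ) := by
      rw [le_div_iff₀ (by positivity)]
      nlinarith [sq_nonneg (μ * x - (z - deriv f 0))]
    show z * x - f x ≤ _
    nlinarith [h1, h2]
  set c := t * a + (1 - t) * b with hc
  obtain ⟨xc, hxc⟩ := deriv_surj hμ hstrong hd hsm c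
  have hkey : ∀ z : ℝ, (c * xc - f xc) + (z - c) * xc + (z - c) ^ 2 / (2 * Mi)
      ≤ ⨆ x, (z * x - f x) := by
    intro z
    set X := xc + (z - c) / Mi with hX
    have hsmu := smooth_upper hM hd hsm xc X
    rw [hxc] at hsmu
    have e1 : z * X - (f xc + c * (X - xc) + Mi / 2 * (X - xc) ^ 2)
        = (c * xc - f xc) + (z - c) * xc + (z - c) ^ 2 / (2 * Mi) := by
      rw [hX]; field_simp; ring
    have h3 : (c * xc - f xc) + (z - c) * xc + (z - c) ^ 2 / (2 * Mi) ≤ z * X - f X := by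
      rw [← e1]; linarith
    exact h3.trans (le_ciSup (hbdd z) X)
  have hsupc : (⨆ x, (c * x - f x)) = c * xc - f xc := by
    apply le_antisymm
    · refine ciSup_le fun x => ?_
      have ht := tangent_le hconv hd xc x
      rw [hxc] at ht
      linarith
    · exact le_ciSup (hbdd c) xc
  rw [hsupc]
  have h1 := mul_le_mul_of_nonneg_left (hkey a) ht0
  have h2 := mul_le_mul_of_nonneg_left (hkey b) (by linarith : (0:ℝ) ≤ 1 - t)
  have e : t * ((c * xc - f xc) + (a - c) * xc + (a - c) ^ 2 / (2 * Mi))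
      + (1 - t) * ((c * xc - f xc) + (b - c) * xc + (b - c) ^ 2 / (2 * Mi))
      = (c * xc - f xc) + 1 / (2 * Mi) * (t * (1 - t) * (a - b) ^ 2) := by
    rw [hc]; field_simp; ring
  linarith [h1, h2]


lemma dot_sum {m k : ℕ} (v : Fin m → ℝ) (g : Fin k → Fin m → ℝ) :
    v ⬝ᵥ (∑ j, g j) = ∑ j, v ⬝ᵥ g j := by
  simp only [dotProduct, Finset.sum_apply, Finset.mul_sum]
  exact Finset.sum_comm

lemma seminorm_bound {n E : ℕ} (A : Matrix (Fin n) (Fin E) ℝ) (γmin : ℝ)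
    (hγmin : IsLeast {γ : ℝ | γ ≠ 0 ∧ ∃ v : Fin E → ℝ, v ≠ 0 ∧ (Aᵀ * A).mulVec v = γ • v} γmin)
    (K : Submodule ℝ (EuclideanSpace ℝ (Fin E)))
    (hK : ∀ x : EuclideanSpace ℝ (Fin E), x ∈ K ↔ ∃ y : Fin n → ℝ, Aᵀ.mulVec y = x)
    (z : EuclideanSpace ℝ (Fin E)) :
    γmin * ‖(K.orthogonalProjection z : EuclideanSpace ℝ (Fin E))‖ ^ 2
      ≤ ∑ i, (A.mulVec z i) ^ 2 := by
  classical
  -- inner product as dot product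
  have hinner : ∀ v w : EuclideanSpace ℝ (Fin E), (inner ℝ v w : ℝ) = (v : Fin E → ℝ) ⬝ᵥ (w : Fin E → ℝ) := by
    intro v w
    rw [EuclideanSpace.inner_eq_star_dotProduct, dotProduct_comm]
    rfl
  -- vectors orthogonal to K are in the kernel of A
  have hker : ∀ w : EuclideanSpace ℝ (Fin E), w ∈ Kᗮ → A.mulVec w = 0 := by
    intro w hw
    have h1 : A.mulVec w ⬝ᵥ A.mulVec w = (Aᵀ.mulVec (A.mulVec w)) ⬝ᵥ w := by
      rw [dotProduct_mulVec, mulVec_transpose]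
    have h2 : (WithLp.toLp 2 (Aᵀ.mulVec (A.mulVec w)) : EuclideanSpace ℝ (Fin E)) ∈ K :=
      (hK _).mpr ⟨A.mulVec w, rfl⟩
    have h3 := (Submodule.mem_orthogonal K w).mp hw _ h2
    rw [hinner, WithLp.ofLp_toLp] at h3
    rw [h3] at h1
    exact dotProduct_self_eq_zero.mp h1
  set u : EuclideanSpace ℝ (Fin E) := (K.orthogonalProjection z : EuclideanSpace ℝ (Fin E)) with hu
  -- A z = A u
  have hAzu : A.mulVec z = A.mulVec u := by
    have hw : z - u ∈ Kᗮ := K.sub_starProjection_mem_orthogonal z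
    have h1 : A.mulVec (z - u) = 0 := hker _ hw
    have h2 : A.mulVec ((z : Fin E → ℝ) - (u : Fin E → ℝ)) = 0 := h1
    rw [mulVec_sub] at h2
    funext i
    have := congrFun h2 i
    simp only [Pi.sub_apply, Pi.zero_apply, sub_eq_zero] at this
    exact this
  -- u is in the range of Aᵀ
  obtain ⟨yv, hyv⟩ := (hK u).mp (by rw [hu]; exact SetLike.coe_mem _)
  -- spectral decomposition of B = Aᵀ * A
  have hB : (Aᵀ * A).IsHermitian := by
    have := isHermitian_conjTranspose_mul_self A
    rwa [conjTranspose_eq_transpose_of_trivial] at this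
  set b := hB.eigenvectorBasis with hbdef
  set lam := hB.eigenvalues with hlamdef
  have hbe : ∀ j, (Aᵀ * A).mulVec (b j) = lam j • ⇑(b j) := fun j => hB.mulVec_eigenvectorBasis j
  set c : Fin E → ℝ := fun j => (b j : Fin E → ℝ) ⬝ᵥ (u : Fin E → ℝ) with hc
  have hrepr : ∀ j, b.repr u j = c j := by
    intro j
    rw [b.repr_apply_apply, hinner]
  -- Parseval
  have hnorm : ‖u‖ ^ 2 = ∑ j, c j ^ 2 := by
    rw [← b.repr.norm_map u, EuclideanSpace.norm_eq, Real.sq_sqrt (by positivity)]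
    refine Finset.sum_congr rfl fun j _ => ?_
    rw [Real.norm_eq_abs, sq_abs, hrepr j]
  -- expansion of u in the eigenbasis (as a plain function)
  have hsumf : (u : Fin E → ℝ) = ∑ j, c j • (b j : Fin E → ℝ) := by
    have h1 : ∑ j, b.repr u j • b j = u := b.sum_repr u
    have h2 : (u : Fin E → ℝ) = ∑ j, b.repr u j • b j := congrArg WithLp.ofLp h1.symm
    rw [h2, WithLp.ofLp_sum]
    refine Finset.sum_congr rfl fun j _ => by rw [WithLp.ofLp_smul, hrepr j]
  -- quadratic form
  have hBu : (Aᵀ * A).mulVec u = ∑ j, c j • (lam j • (b j : Fin E → ℝ)) := by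
    calc (Aᵀ * A).mulVec u = (Aᵀ * A).mulVecLin (∑ j, c j • (b j : Fin E → ℝ)) := by
          rw [← hsumf]; rfl
      _ = ∑ j, c j • (Aᵀ * A).mulVecLin (b j : Fin E → ℝ) := by
          rw [map_sum]
          exact Finset.sum_congr rfl fun j _ => map_smul _ _ _
      _ = ∑ j, c j • (lam j • (b j : Fin E → ℝ)) := by
          refine Finset.sum_congr rfl fun j _ => ?_
          rw [mulVecLin_apply, hbe j]
  have hquad : (u : Fin E → ℝ) ⬝ᵥ ((Aᵀ * A).mulVec u) = ∑ j, lam j * c j ^ 2 := by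
    rw [hBu, dot_sum]
    refine Finset.sum_congr rfl fun j _ => ?_
    rw [dotProduct_smul, dotProduct_smul, dotProduct_comm]
    have : (b j : Fin E → ℝ) ⬝ᵥ u = c j := rfl
    rw [this]
    simp only [smul_eq_mul]
    ring
  -- quadratic form equals sum of squares of A u
  have hsq : (u : Fin E → ℝ) ⬝ᵥ ((Aᵀ * A).mulVec u) = ∑ i, (A.mulVec u i) ^ 2 := by
    rw [← mulVec_mulVec, dotProduct_mulVec, vecMul_transpose]
    simp [dotProduct, sq]
  -- zero eigenvalue components vanish
  have hzero : ∀ j, lam j = 0 → c j = 0 := by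
    intro j hj
    have hAbj : A.mulVec (b j) = 0 := by
      have h1 : A.mulVec (b j) ⬝ᵥ A.mulVec (b j) = (b j : Fin E → ℝ) ⬝ᵥ ((Aᵀ * A).mulVec (b j)) := by
        rw [← mulVec_mulVec, dotProduct_mulVec, mulVec_transpose]
        exact dotProduct_comm _ _
      rw [hbe j, hj, zero_smul, dotProduct_zero] at h1
      exact dotProduct_self_eq_zero.mp h1
    show (b j : Fin E → ℝ) ⬝ᵥ (u : Fin E → ℝ) = 0
    rw [← hyv, dotProduct_mulVec, vecMul_transpose, hAbj, zero_dotProduct]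
  -- nonzero eigenvalues are at least γmin
  have hpos : ∀ j, lam j ≠ 0 → γmin ≤ lam j := by
    intro j hj
    exact hγmin.2 ⟨hj, ⟨b j, fun h => b.orthonormal.ne_zero j (by simpa using congrArg (WithLp.toLp 2) h), hbe j⟩⟩
  -- conclude
  have hmain : γmin * ∑ j, c j ^ 2 ≤ ∑ j, lam j * c j ^ 2 := by
    rw [Finset.mul_sum]
    refine Finset.sum_le_sum fun j _ => ?_
    rcases eq_or_ne (lam j) 0 with h | h
    · rw [h, hzero j h]; simp
    · exact mul_le_mul_of_nonneg_right (hpos j h) (sq_nonneg _)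
  calc γmin * ‖u‖ ^ 2 = γmin * ∑ j, c j ^ 2 := by rw [hnorm]
    _ ≤ ∑ j, lam j * c j ^ 2 := hmain
    _ = ∑ i, (A.mulVec u i) ^ 2 := by rw [← hquad, hsq]
    _ = ∑ i, (A.mulVec z i) ^ 2 := by rw [hAzu]

/-- Strong convexity of the dual function `F(λ) = Σᵢ fᵢ*((A λ)ᵢ)` with
constant `γ⁺_min / M_max` with respect to the seminorm `|x|_A = ‖P x‖`, where `P` is the
orthogonal projection onto the range of `y ↦ Aᵀ y`. -/
theorem stmt1 (n E : ℕ)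
    (A : Matrix (Fin n) (Fin E) ℝ)
    (f : Fin n → ℝ → ℝ) (μ M : Fin n → ℝ)
    (hμM : ∀ i, 0 < μ i ∧ μ i ≤ M i)
    (hconv : ∀ i, ConvexOn ℝ Set.univ (f i))
    (hstrong : ∀ i, ConvexOn ℝ Set.univ (fun x => f i x - (μ i / 2) * x ^ 2))
    (hdiff : ∀ i, Differentiable ℝ (f i))
    (hsmooth : ∀ i, LipschitzWith (M i).toNNReal (deriv (f i)))
    (Mmax : ℝ) (hMmax : IsGreatest (Set.range M) Mmax)
    (γmin : ℝ)
    (hγmin : IsLeast {γ : ℝ | γ ≠ 0 ∧ ∃ v : Fin E → ℝ, v ≠ 0 ∧ (Aᵀ * A).mulVec v = γ • v} γmin)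
    (K : Submodule ℝ (EuclideanSpace ℝ (Fin E)))
    (hK : ∀ x : EuclideanSpace ℝ (Fin E), x ∈ K ↔ ∃ y : Fin n → ℝ, Aᵀ.mulVec y = x)
    (F : EuclideanSpace ℝ (Fin E) → ℝ)
    (hF : ∀ lam : EuclideanSpace ℝ (Fin E),
      F lam = ∑ i, ⨆ x : ℝ, (A.mulVec lam i * x - f i x)) :
    ∀ (x y : EuclideanSpace ℝ (Fin E)) (t : ℝ), t ∈ Set.Icc (0 : ℝ) 1 →
      F (t • x + (1 - t) • y) ≤
        t * F x + (1 - t) * F y -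
          (γmin / (2 * Mmax)) * t * (1 - t) *
            ‖(K.orthogonalProjection (x - y) : EuclideanSpace ℝ (Fin E))‖ ^ 2 := by
  intro x y t ht
  obtain ⟨ht0, ht1⟩ := ht
  obtain ⟨i0, hi0⟩ := hMmax.1
  have hMipos : ∀ i, 0 < M i := fun i => lt_of_lt_of_le (hμM i).1 (hμM i).2
  have hMmaxpos : 0 < Mmax := hi0 ▸ hMipos i0
  have hlin : ∀ i, A.mulVec (t • x + (1 - t) • y) i
      = t * A.mulVec x i + (1 - t) * A.mulVec y i := by
    intro i
    simp only [Matrix.mulVec, dotProduct, Finset.mul_sum]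
    rw [← Finset.sum_add_distrib]
    refine Finset.sum_congr rfl fun j _ => ?_
    have hj : (t • (x : Fin E → ℝ) + (1 - t) • (y : Fin E → ℝ)) j = t * x j + (1 - t) * y j := rfl
    rw [hj]; ring
  have hsub : ∀ i, A.mulVec (x - y) i = A.mulVec x i - A.mulVec y i := by
    intro i
    have h2 : A.mulVec ((x : Fin E → ℝ) - (y : Fin E → ℝ)) = A.mulVec x - A.mulVec y :=
      mulVec_sub A _ _
    exact congrFun h2 i
  have hper : ∀ i, (⨆ x' : ℝ, (A.mulVec (t • x + (1 - t) • y) i * x' - f i x')) ≤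
      t * (⨆ x' : ℝ, (A.mulVec x i * x' - f i x'))
        + (1 - t) * (⨆ x' : ℝ, (A.mulVec y i * x' - f i x'))
        - 1 / (2 * Mmax) * (t * (1 - t) * (A.mulVec x i - A.mulVec y i) ^ 2) := by
    intro i
    have hconj := conj_strong_ineq (hμM i).1 (hμM i).2 (hconv i) (hstrong i) (hdiff i)
      (hsmooth i) (A.mulVec x i) (A.mulVec y i) t ht0 ht1
    have heq : (⨆ x' : ℝ, (A.mulVec (t • x + (1 - t) • y) i * x' - f i x'))
        = ⨆ x' : ℝ, ((t * A.mulVec x i + (1 - t) * A.mulVec y i) * x' - f i x') := by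
      congr 1; funext x'; rw [hlin i]
    rw [heq]
    refine hconj.trans ?_
    have h1 : 1 / (2 * Mmax) ≤ 1 / (2 * M i) := by
      apply one_div_le_one_div_of_le (by linarith [hMipos i])
      have := hMmax.2 ⟨i, rfl⟩
      linarith
    have h2 : 0 ≤ t * (1 - t) * (A.mulVec x i - A.mulVec y i) ^ 2 :=
      mul_nonneg (mul_nonneg ht0 (by linarith)) (sq_nonneg _)
    linarith [mul_le_mul_of_nonneg_right h1 h2]
  rw [hF, hF, hF]
  have hcalc : ∑ i, ⨆ x' : ℝ, (A.mulVec (t • x + (1 - t) • y) i * x' - f i x')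
      ≤ t * (∑ i, ⨆ x' : ℝ, (A.mulVec x i * x' - f i x'))
        + (1 - t) * (∑ i, ⨆ x' : ℝ, (A.mulVec y i * x' - f i x'))
        - 1 / (2 * Mmax) * (t * (1 - t) * ∑ i, (A.mulVec x i - A.mulVec y i) ^ 2) := by
    calc ∑ i, ⨆ x' : ℝ, (A.mulVec (t • x + (1 - t) • y) i * x' - f i x')
        ≤ ∑ i, (t * (⨆ x' : ℝ, (A.mulVec x i * x' - f i x'))
          + (1 - t) * (⨆ x' : ℝ, (A.mulVec y i * x' - f i x'))
          - 1 / (2 * Mmax) * (t * (1 - t) * (A.mulVec x i - A.mulVec y i) ^ 2)) :=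
          Finset.sum_le_sum fun i _ => hper i
      _ = _ := by
          rw [Finset.sum_sub_distrib, Finset.sum_add_distrib, ← Finset.mul_sum,
            ← Finset.mul_sum, ← Finset.mul_sum, ← Finset.mul_sum]
  have hS : ∑ i, (A.mulVec x i - A.mulVec y i) ^ 2 = ∑ i, (A.mulVec (x - y) i) ^ 2 :=
    Finset.sum_congr rfl fun i _ => by rw [hsub i]
  rw [hS] at hcalc
  have hsb := seminorm_bound A γmin hγmin K hK (x - y)
  have hcoef : 0 ≤ t * (1 - t) / (2 * Mmax) := by
    apply div_nonneg (mul_nonneg ht0 (by linarith)) (by linarith)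
  have h5 := mul_le_mul_of_nonneg_left hsb hcoef
  set N : ℝ := ‖(K.orthogonalProjection (x - y) : EuclideanSpace ℝ (Fin E))‖ ^ 2 with hN
  set S : ℝ := ∑ i, (A.mulVec (x - y) i) ^ 2 with hSdef
  have h6 : γmin / (2 * Mmax) * t * (1 - t) * N ≤ 1 / (2 * Mmax) * (t * (1 - t) * S) := by
    have e1 : γmin / (2 * Mmax) * t * (1 - t) * N = t * (1 - t) / (2 * Mmax) * (γmin * N) := by
      ring
    have e2 : 1 / (2 * Mmax) * (t * (1 - t) * S) = t * (1 - t) / (2 * Mmax) * S := by ring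
    rw [e1, e2]; exact h5
  simp only [WithLp.ofLp_add, WithLp.ofLp_smul]
  linarith [hcalc, h6]
end

section
/- Let F : EuclideanSpace ℝ (Fin E) → ℝ be differentiable with L-Lipschitz gradient ∇F, where L > 0. Then for every λ and every coordinate ℓ : Fin E, the coordinate-descent update satisfies F(λ − (1/L)·(∇F(λ))_ℓ • e_ℓ) ≤ F(λ) − (1/(2L))·((∇F(λ))_ℓ)², where e_ℓ is the ℓ-th standard basis vector and (∇F(λ))_ℓ the ℓ-th component of the gradient. -/
/-!
Along the line `t ↦ x + t • v` the slope of `f` exceeds its value at `t = 0` by at most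
`K t ‖v‖²`, so `f (x + v)` lies below the quadratic model `f x + ⟪∇f x, v⟫ + K/2 ‖v‖²`
(the descent lemma). Minimizing this model along the coordinate direction `e_ℓ` gives the step
`-(1/L) (∇F λ)_ℓ e_ℓ` and the guaranteed decrease `(∇F λ)_ℓ² / (2L)`.
-/

open InnerProductSpace
open scoped NNReal

theorem apply_add_le_of_lipschitzWith_fderiv {E : Type*} [NormedAddCommGroup E]
    [NormedSpace ℝ E] {f : E → ℝ} {K : ℝ≥0} (hf : Differentiable ℝ f)
    (hlip : LipschitzWith K (fderiv ℝ f)) (x v : E) :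
    f (x + v) ≤ f x + fderiv ℝ f x v + K / 2 * ‖v‖ ^ 2 := by
  have hline (t : ℝ) : HasDerivAt (fun t : ℝ => f (x + t • v)) (fderiv ℝ f (x + t • v) v) t := by
    have : HasDerivAt (fun t : ℝ => x + t • v) v t := by
      simpa using ((hasDerivAt_id t).smul_const v).const_add x
    exact (hf _).hasFDerivAt.comp_hasDerivAt t this
  have hbound (t : ℝ) :
      HasDerivAt (fun t : ℝ => f x + t * fderiv ℝ f x v + K / 2 * t ^ 2 * ‖v‖ ^ 2)
        (fderiv ℝ f x v + K * t * ‖v‖ ^ 2) t := by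
    have := (((hasDerivAt_id t).mul_const (fderiv ℝ f x v)).const_add (f x)).add
      (((hasDerivAt_pow 2 t).const_mul ((K : ℝ) / 2)).mul_const (‖v‖ ^ 2))
    exact this.congr_deriv (by simp only [one_mul, Nat.cast_ofNat]; ring)
  have hslope {t : ℝ} (ht : 0 ≤ t) :
      fderiv ℝ f (x + t • v) v ≤ fderiv ℝ f x v + K * t * ‖v‖ ^ 2 := by
    have hgap : ‖fderiv ℝ f (x + t • v) - fderiv ℝ f x‖ ≤ K * (t * ‖v‖) := by
      simpa [dist_eq_norm, norm_smul, abs_of_nonneg ht] using hlip.dist_le_mul (x + t • v) x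
    calc fderiv ℝ f (x + t • v) v
        = fderiv ℝ f x v + (fderiv ℝ f (x + t • v) - fderiv ℝ f x) v := by simp
      _ ≤ fderiv ℝ f x v + K * (t * ‖v‖) * ‖v‖ := by
          gcongr
          exact (le_abs_self _).trans (((fderiv ℝ f (x + t • v) - fderiv ℝ f x).le_opNorm v).trans
            (by gcongr))
      _ = fderiv ℝ f x v + K * t * ‖v‖ ^ 2 := by ring
  have := image_le_of_deriv_right_le_deriv_boundary (a := 0) (b := 1)
    (fun t _ => (hline t).continuousAt.continuousWithinAt)
    (fun t _ => (hline t).hasDerivWithinAt) (by simp)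
    (fun t _ => (hbound t).continuousAt.continuousWithinAt)
    (fun t _ => (hbound t).hasDerivWithinAt) (fun t ht => hslope ht.1)
    (Set.right_mem_Icc.2 zero_le_one)
  simpa using this

theorem apply_add_le_of_lipschitzWith_gradient {E : Type*} [NormedAddCommGroup E]
    [InnerProductSpace ℝ E] [CompleteSpace E] {f : E → ℝ} {K : ℝ≥0} (hf : Differentiable ℝ f)
    (hlip : LipschitzWith K (gradient f)) (x v : E) :
    f (x + v) ≤ f x + inner ℝ (gradient f x) v + K / 2 * ‖v‖ ^ 2 := by
  have hfderiv (y : E) : fderiv ℝ f y = toDual ℝ E (gradient f y) := by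
    simp [gradient]
  have hlip' : LipschitzWith K (fderiv ℝ f) := by
    simpa [Function.comp_def, ← hfderiv] using (toDual ℝ E).lipschitz.comp hlip
  have := apply_add_le_of_lipschitzWith_fderiv hf hlip' x v
  rwa [hfderiv x, toDual_apply_apply] at this

theorem apply_sub_inner_gradient_smul_le {E : Type*} [NormedAddCommGroup E]
    [InnerProductSpace ℝ E] [CompleteSpace E] {f : E → ℝ} {K : ℝ≥0} (hf : Differentiable ℝ f)
    (hlip : LipschitzWith K (gradient f)) (x : E) {u : E} (hu : ‖u‖ = 1) :
    f (x - (1 / (K : ℝ) * inner ℝ (gradient f x) u) • u) ≤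
      f x - 1 / (2 * (K : ℝ)) * inner ℝ (gradient f x) u ^ 2 := by
  set c := inner ℝ (gradient f x) u
  have := apply_add_le_of_lipschitzWith_gradient hf hlip x (-((1 / (K : ℝ) * c) • u))
  rw [← sub_eq_add_neg, inner_neg_right, inner_smul_right, norm_neg, norm_smul, hu] at this
  have hstep : -(1 / (K : ℝ) * c * c) + K / 2 * (‖1 / (K : ℝ) * c‖ * 1) ^ 2 =
      -(1 / (2 * (K : ℝ)) * c ^ 2) := by
    rw [mul_one, Real.norm_eq_abs, sq_abs]
    -- for `K = 0` both sides vanish, as `1 / 0 = 0`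
    rcases eq_or_ne (K : ℝ) 0 with hK | hK
    · simp [hK]
    · field_simp
      ring
  linarith

/-- Descent lemma for a coordinate-descent step with stepsize `1/L` on an
`L`-smooth function. -/
theorem stmt3 (E : ℕ)
    (F : EuclideanSpace ℝ (Fin E) → ℝ) (L : ℝ) (hL : 0 < L)
    (hdiff : Differentiable ℝ F)
    (hlip : LipschitzWith L.toNNReal (gradient F))
    (lam : EuclideanSpace ℝ (Fin E)) (ℓ : Fin E) :
    F (lam - ((1 / L) * gradient F lam ℓ) • EuclideanSpace.single ℓ (1 : ℝ)) ≤
      F lam - (1 / (2 * L)) * (gradient F lam ℓ) ^ 2 := by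
  have hcoord : inner ℝ (gradient F lam) (EuclideanSpace.single ℓ (1 : ℝ)) = gradient F lam ℓ := by
    rw [EuclideanSpace.inner_single_right, conj_trivial, one_mul]
  have := apply_sub_inner_gradient_smul_le hdiff hlip lam
    (u := EuclideanSpace.single ℓ (1 : ℝ)) (by simp)
  rwa [hcoord, Real.coe_toNNReal L hL.le] at this
end

section
/- (Rate of SU-CD.) Let F : EuclideanSpace ℝ (Fin E) → ℝ be differentiable with L-Lipschitz gradient (L > 0), let K be a subspace of EuclideanSpace ℝ (Fin E) with orthogonal projection P, and suppose: (a) ∇F(λ) ∈ K for every λ; (b) F is σ-strongly convex (σ > 0) with respect to the seminorm x ↦ ‖P x‖, in the first-order sense F(y) ≥ F(x) + ⟨∇F(x), y−x⟩ + (σ/2)·‖P(y−x)‖² for all x, y; (c) F attains its minimum at λ*. Let S : Fin n → Finset (Fin E) be a set system (each S i nonempty, every coordinate in exactly two sets) with maximum cardinality N_max. Then for every λ, (1/n)·Σ_{i} (1/|S i|)·Σ_{ℓ ∈ S i} F(λ − (1/L)·(∇F(λ))_ℓ • e_ℓ) − F(λ*) ≤ (1 − 2σ/(L·n·N_max))·(F(λ)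 − F(λ*)). -/
open RealInnerProductSpace

lemma descent_lemma {E : ℕ} (F : EuclideanSpace ℝ (Fin E) → ℝ) (L : ℝ) (hL : 0 < L)
    (hdiff : Differentiable ℝ F) (hlip : LipschitzWith L.toNNReal (gradient F))
    (x v : EuclideanSpace ℝ (Fin E)) :
    F (x + v) ≤ F x + ⟪gradient F x, v⟫ + L / 2 * ‖v‖ ^ 2 := by
  set φ' : ℝ → ℝ := fun t => ⟪gradient F (x + t • v), v⟫ with hφ'
  have hcont : Continuous φ' := by
    have hg : Continuous (gradient F) := hlip.continuous
    exact Continuous.inner (hg.comp (by continuity)) continuous_const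
  have hderiv : ∀ t ∈ Set.uIcc (0:ℝ) 1, HasDerivAt (fun t => F (x + t • v)) (φ' t) t := by
    intro t _
    have h1 : HasDerivAt (fun t : ℝ => x + t • v) v t := by
      simpa using ((hasDerivAt_id t).smul_const v).const_add x
    have h2 := ((hdiff (x + t • v)).hasGradientAt.hasFDerivAt).comp_hasDerivAt t h1
    exact h2.congr_deriv (by simp [φ', gradient, InnerProductSpace.toDual_symm_apply])
  have hint : IntervalIntegrable φ' MeasureTheory.volume 0 1 :=
    hcont.intervalIntegrable 0 1
  have key : ∫ t in (0:ℝ)..1, φ' t = F (x + v) - F x := by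
    have := intervalIntegral.integral_eq_sub_of_hasDerivAt hderiv hint
    simpa using this
  have hbound : ∀ t ∈ Set.Icc (0:ℝ) 1, φ' t ≤ ⟪gradient F x, v⟫ + L * t * ‖v‖ ^ 2 := by
    intro t ht
    have h1 : φ' t - ⟪gradient F x, v⟫ = ⟪gradient F (x + t • v) - gradient F x, v⟫ := by
      rw [inner_sub_left]
    have h2 : ‖gradient F (x + t • v) - gradient F x‖ ≤ L * t * ‖v‖ := by
      have h := hlip.dist_le_mul (x + t • v) x
      have hd : dist (x + t • v) x = t * ‖v‖ := by
        rw [dist_eq_norm, add_sub_cancel_left, norm_smul, Real.norm_eq_abs,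
          abs_of_nonneg ht.1]
      rw [Real.coe_toNNReal _ hL.le, hd, dist_eq_norm, ← mul_assoc] at h
      exact h
    have h3 : ⟪gradient F (x + t • v) - gradient F x, v⟫ ≤ L * t * ‖v‖ * ‖v‖ :=
      le_trans (real_inner_le_norm _ _) (by
        have hv : (0:ℝ) ≤ ‖v‖ := norm_nonneg _
        nlinarith [norm_nonneg (gradient F (x + t • v) - gradient F x)])
    nlinarith [h3, h1]
  have hmono : ∫ t in (0:ℝ)..1, φ' t ≤ ∫ t in (0:ℝ)..1, (⟪gradient F x, v⟫ + L * t * ‖v‖ ^ 2) := by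
    apply intervalIntegral.integral_mono_on (by norm_num) hint
    · exact (Continuous.intervalIntegrable (by fun_prop) 0 1)
    · exact hbound
  have hval : ∫ t in (0:ℝ)..1, (⟪gradient F x, v⟫ + L * t * ‖v‖ ^ 2)
      = ⟪gradient F x, v⟫ + L / 2 * ‖v‖ ^ 2 := by
    rw [intervalIntegral.integral_add (intervalIntegrable_const)
      (Continuous.intervalIntegrable (by fun_prop) 0 1)]
    have h2 : (∫ t in (0:ℝ)..1, L * t * ‖v‖ ^ 2) = L * ‖v‖ ^ 2 * ∫ t in (0:ℝ)..1, t := by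
      rw [← intervalIntegral.integral_const_mul]
      congr 1; funext t; ring
    rw [h2, integral_id]
    simp
    ring
  linarith [key ▸ hmono, hval ▸ hmono]

set_option maxHeartbeats 1000000

/-- Rate of SU-CD: linear convergence rate of set-wise uniform coordinate
descent for an `L`-smooth function that is `σ`-strongly convex with respect to the
seminorm `x ↦ ‖P x‖`, where `P` is the orthogonal projection onto a subspace `K`
containing all gradients. -/
theorem stmt6 (n E : ℕ) (hn : 0 < n)
    (F : EuclideanSpace ℝ (Fin E) → ℝ) (L : ℝ) (hL : 0 < L)
    (hdiff : Differentiable ℝ F)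
    (hlip : LipschitzWith L.toNNReal (gradient F))
    (K : Submodule ℝ (EuclideanSpace ℝ (Fin E)))
    (hgradK : ∀ lam : EuclideanSpace ℝ (Fin E), gradient F lam ∈ K)
    (σ : ℝ) (hσ : 0 < σ)
    (hsc : ∀ x y : EuclideanSpace ℝ (Fin E),
      F y ≥ F x + ⟪gradient F x, y - x⟫ +
        (σ / 2) * ‖(K.orthogonalProjectionOnto (y - x) : EuclideanSpace ℝ (Fin E))‖ ^ 2)
    (lamstar : EuclideanSpace ℝ (Fin E))
    (hmin : ∀ lam : EuclideanSpace ℝ (Fin E), F lamstar ≤ F lam)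
    (S : Fin n → Finset (Fin E))
    (hne : ∀ i, (S i).Nonempty)
    (htwo : ∀ ℓ : Fin E, (Finset.univ.filter (fun i => ℓ ∈ S i)).card = 2)
    (Nmax : ℕ) (hNmax : IsGreatest (Set.range fun i => (S i).card) Nmax)
    (lam : EuclideanSpace ℝ (Fin E)) :
    (1 / (n : ℝ)) * (∑ i, (1 / ((S i).card : ℝ)) *
        ∑ ℓ ∈ S i, F (lam - ((1 / L) * gradient F lam ℓ) • EuclideanSpace.single ℓ (1 : ℝ)))
      - F lamstar ≤
      (1 - 2 * σ / (L * n * Nmax)) * (F lam - F lamstar) := by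
  set g := gradient F lam with hgdef
  have hnpos : (0:ℝ) < n := by exact_mod_cast hn
  have hNpos : (0:ℝ) < Nmax := by
    obtain ⟨i, hi⟩ := hNmax.1
    have h1 : 0 < (S i).card := (hne i).card_pos
    simp only at hi
    exact_mod_cast hi ▸ h1
  have hc : (0:ℝ) < L * n * Nmax := by positivity
  -- single coordinate step bound
  have hstep : ∀ ℓ : Fin E, F (lam - ((1 / L) * g ℓ) • EuclideanSpace.single ℓ (1 : ℝ))
      ≤ F lam - g ℓ ^ 2 / (2 * L) := by
    intro ℓ
    have h := descent_lemma F L hL hdiff hlip lam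
      (-(((1 / L) * g ℓ) • EuclideanSpace.single ℓ (1:ℝ)))
    rw [← sub_eq_add_neg] at h
    have hin : ⟪g, -(((1 / L) * g ℓ) • EuclideanSpace.single ℓ (1:ℝ))⟫
        = -((1 / L) * g ℓ * g ℓ) := by
      rw [inner_neg_right, real_inner_smul_right]
      have : ⟪g, EuclideanSpace.single ℓ (1:ℝ)⟫ = g ℓ := by
        rw [EuclideanSpace.inner_single_right]; simp
      rw [this]
    have hnrm : ‖-(((1 / L) * g ℓ) • EuclideanSpace.single ℓ (1:ℝ))‖ = |(1/L) * g ℓ| := by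
      rw [norm_neg, norm_smul, EuclideanSpace.norm_single, Real.norm_eq_abs, norm_one, mul_one]
    rw [hin, hnrm] at h
    have heq : F lam + -((1 / L) * g ℓ * g ℓ) + L / 2 * |(1/L) * g ℓ| ^ 2
        = F lam - g ℓ ^ 2 / (2 * L) := by
      rw [sq_abs]; field_simp; ring
    linarith [heq ▸ h]
  -- norm squared as sum of squares
  have hnormsq : ∑ ℓ : Fin E, g ℓ ^ 2 = ‖g‖ ^ 2 := by
    rw [← real_inner_self_eq_norm_sq, PiLp.inner_apply]
    refine Finset.sum_congr rfl fun ℓ _ => ?_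
    simp [RCLike.inner_apply, sq]
  -- double counting
  have hdouble : ∑ i, ∑ ℓ ∈ S i, g ℓ ^ 2 = 2 * ‖g‖ ^ 2 := by
    calc ∑ i, ∑ ℓ ∈ S i, g ℓ ^ 2
        = ∑ i, ∑ ℓ : Fin E, if ℓ ∈ S i then g ℓ ^ 2 else 0 := by
          refine Finset.sum_congr rfl fun i _ => ?_
          rw [Finset.sum_ite_mem, Finset.univ_inter]
      _ = ∑ ℓ : Fin E, ∑ i, if ℓ ∈ S i then g ℓ ^ 2 else 0 := Finset.sum_comm
      _ = ∑ ℓ : Fin E, 2 * g ℓ ^ 2 := by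
          refine Finset.sum_congr rfl fun ℓ _ => ?_
          rw [← Finset.sum_filter, Finset.sum_const, htwo ℓ]
          simp [two_smul]; ring
      _ = 2 * ‖g‖ ^ 2 := by rw [← hnormsq, Finset.mul_sum]
  -- per-set bound
  have hi_bound : ∀ i, (1 / ((S i).card : ℝ)) *
      ∑ ℓ ∈ S i, F (lam - ((1 / L) * g ℓ) • EuclideanSpace.single ℓ (1 : ℝ))
      ≤ F lam - (∑ ℓ ∈ S i, g ℓ ^ 2) / (2 * L * Nmax) := by
    intro i
    have hcard : (0:ℝ) < ((S i).card : ℝ) := by exact_mod_cast (hne i).card_pos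
    have hcardN : ((S i).card : ℝ) ≤ (Nmax : ℝ) := by
      exact_mod_cast hNmax.2 ⟨i, rfl⟩
    have hQ : (0:ℝ) ≤ ∑ ℓ ∈ S i, g ℓ ^ 2 := Finset.sum_nonneg fun ℓ _ => sq_nonneg _
    have hsum : ∑ ℓ ∈ S i, F (lam - ((1 / L) * g ℓ) • EuclideanSpace.single ℓ (1 : ℝ))
        ≤ ((S i).card : ℝ) * F lam - (∑ ℓ ∈ S i, g ℓ ^ 2) / (2 * L) := by
      calc ∑ ℓ ∈ S i, F (lam - ((1 / L) * g ℓ) • EuclideanSpace.single ℓ (1 : ℝ))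
          ≤ ∑ ℓ ∈ S i, (F lam - g ℓ ^ 2 / (2 * L)) :=
            Finset.sum_le_sum fun ℓ _ => hstep ℓ
        _ = ((S i).card : ℝ) * F lam - (∑ ℓ ∈ S i, g ℓ ^ 2) / (2 * L) := by
            rw [Finset.sum_sub_distrib, Finset.sum_const, nsmul_eq_mul, Finset.sum_div]
    have h1 : (1 / ((S i).card : ℝ)) *
        ∑ ℓ ∈ S i, F (lam - ((1 / L) * g ℓ) • EuclideanSpace.single ℓ (1 : ℝ))
        ≤ F lam - (∑ ℓ ∈ S i, g ℓ ^ 2) / (2 * L * ((S i).card : ℝ)) := by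
      have := mul_le_mul_of_nonneg_left hsum (le_of_lt (by positivity :
        (0:ℝ) < 1 / ((S i).card : ℝ)))
      have heq : (1 / ((S i).card : ℝ)) * (((S i).card : ℝ) * F lam
          - (∑ ℓ ∈ S i, g ℓ ^ 2) / (2 * L))
          = F lam - (∑ ℓ ∈ S i, g ℓ ^ 2) / (2 * L * ((S i).card : ℝ)) := by
        field_simp
      linarith [heq ▸ this]
    have h2 : (∑ ℓ ∈ S i, g ℓ ^ 2) / (2 * L * Nmax)
        ≤ (∑ ℓ ∈ S i, g ℓ ^ 2) / (2 * L * ((S i).card : ℝ)) := by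
      apply div_le_div_of_nonneg_left hQ (by positivity)
      nlinarith
    linarith
  -- total bound
  have htot : (∑ i, (1 / ((S i).card : ℝ)) *
      ∑ ℓ ∈ S i, F (lam - ((1 / L) * g ℓ) • EuclideanSpace.single ℓ (1 : ℝ)))
      ≤ (n : ℝ) * F lam - ‖g‖ ^ 2 / (L * Nmax) := by
    calc (∑ i, (1 / ((S i).card : ℝ)) *
        ∑ ℓ ∈ S i, F (lam - ((1 / L) * g ℓ) • EuclideanSpace.single ℓ (1 : ℝ)))
        ≤ ∑ i, (F lam - (∑ ℓ ∈ S i, g ℓ ^ 2) / (2 * L * Nmax)) :=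
          Finset.sum_le_sum fun i _ => hi_bound i
      _ = (n : ℝ) * F lam - (∑ i, ∑ ℓ ∈ S i, g ℓ ^ 2) / (2 * L * Nmax) := by
          rw [Finset.sum_sub_distrib, Finset.sum_const, nsmul_eq_mul, Finset.sum_div]
          simp
      _ = (n : ℝ) * F lam - ‖g‖ ^ 2 / (L * Nmax) := by
          rw [hdouble]; congr 1; field_simp
  -- strong convexity bound
  have hsc2 : 2 * σ * (F lam - F lamstar) ≤ ‖g‖ ^ 2 := by
    have h := hsc lam lamstar
    set t := ‖(K.orthogonalProjectionOnto (lamstar - lam) : EuclideanSpace ℝ (Fin E))‖ with ht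
    have htn : 0 ≤ t := norm_nonneg _
    have hPC : ⟪g, lamstar - lam⟫
        = ⟪g, (K.orthogonalProjectionOnto (lamstar - lam) : EuclideanSpace ℝ (Fin E))⟫ := by
      have := Submodule.inner_orthogonalProjectionOnto_eq_of_mem_left (K := K)
        ⟨g, hgradK lam⟩ (lamstar - lam)
      simpa using this.symm
    have hcs : -(‖g‖ * t)
        ≤ ⟪g, (K.orthogonalProjectionOnto (lamstar - lam) : EuclideanSpace ℝ (Fin E))⟫ := by
      have := abs_real_inner_le_norm g
        ((K.orthogonalProjectionOnto (lamstar - lam) : EuclideanSpace ℝ (Fin E)))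
      rw [← ht] at this
      linarith [neg_abs_le (⟪g, (K.orthogonalProjectionOnto (lamstar - lam) :
        EuclideanSpace ℝ (Fin E))⟫)]
    rw [hPC] at h
    nlinarith [sq_nonneg (σ * t - ‖g‖), mul_le_mul_of_nonneg_left hcs hσ.le]
  -- combine
  have hD : 0 ≤ F lam - F lamstar := by linarith [hmin lam]
  have key1 : (1 / (n:ℝ)) * (∑ i, (1 / ((S i).card : ℝ)) *
      ∑ ℓ ∈ S i, F (lam - ((1 / L) * g ℓ) • EuclideanSpace.single ℓ (1 : ℝ)))
      ≤ F lam - ‖g‖ ^ 2 / (L * n * Nmax) := by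
    have := mul_le_mul_of_nonneg_left htot (le_of_lt (by positivity : (0:ℝ) < 1/(n:ℝ)))
    have heq : (1/(n:ℝ)) * ((n:ℝ) * F lam - ‖g‖ ^ 2 / (L * Nmax))
        = F lam - ‖g‖ ^ 2 / (L * n * Nmax) := by
      field_simp
    linarith [heq ▸ this]
  have key2 : 2 * σ / (L * n * Nmax) * (F lam - F lamstar) ≤ ‖g‖ ^ 2 / (L * n * Nmax) := by
    rw [div_mul_eq_mul_div]
    exact (div_le_div_iff_of_pos_right hc).mpr (by linarith [hsc2])
  have hr : (1 - 2 * σ / (L * ↑n * ↑Nmax)) * (F lam - F lamstar)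
      = (F lam - F lamstar) - 2 * σ / (L * ↑n * ↑Nmax) * (F lam - F lamstar) := by ring
  rw [hr]
  linarith [key1, key2]
end

section
/- Let S : Fin n → Finset (Fin E) be such that every coordinate j : Fin E belongs to at least one set S i. Then the function ‖x‖_SM := Real.sqrt (Σ_{i : Fin n} max_{j ∈ S i} (x j)²) (with the maximum over an empty set taken as 0) is a norm on ℝ^E: it satisfies the triangle inequality ‖x+y‖_SM ≤ ‖x‖_SM + ‖y‖_SM, absolute homogeneity ‖c•x‖_SM = |c|·‖x‖_SM, and ‖x‖_SM = 0 if and only if x = 0. -/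
/-!
`x ↦ √(∑ᵢ max_{j ∈ S i} (x j)²)` is the norm of `(x|_{S i})ᵢ` in the `ℓ²`-product of the
sup-normed spaces `ℝ^{S i}`, pulled back along the linear restriction map; the cover hypothesis
makes that map injective, so the pull-back is a norm.
-/

theorem Pi.exists_norm_eq_norm_apply {ι : Type*} {G : ι → Type*} [Fintype ι] [Nonempty ι]
    [∀ i, SeminormedAddGroup (G i)] (f : ∀ i, G i) : ∃ i, ‖f‖ = ‖f i‖ := by
  obtain ⟨i, -, hi⟩ := Finset.exists_mem_eq_sup Finset.univ Finset.univ_nonempty fun i => ‖f i‖₊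
  exact ⟨i, by rw [Pi.norm_def, hi, coe_nnnorm]⟩

theorem sSup_image_sq_eq_norm_restrict_sq {κ : Type*} (s : Finset κ) (x : κ → ℝ) :
    sSup ((fun j => x j ^ 2) '' (s : Set κ)) = ‖s.restrict x‖ ^ 2 := by
  rcases s.eq_empty_or_nonempty with rfl | hs
  · rw [Subsingleton.elim (Finset.restrict ∅ x) 0]
    simp
  have : Nonempty s := hs.to_subtype
  obtain ⟨⟨j, hj⟩, hnorm⟩ := Pi.exists_norm_eq_norm_apply (s.restrict x)
  refine IsGreatest.csSup_eq ⟨⟨j, hj, ?_⟩, ?_⟩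
  · rw [hnorm, Real.norm_eq_abs, sq_abs]; rfl
  · rintro _ ⟨k, hk, rfl⟩
    have hle : |x k| ≤ ‖s.restrict x‖ := norm_le_pi_norm (s.restrict x) ⟨k, hk⟩
    simpa only [sq_abs] using pow_le_pow_left₀ (abs_nonneg _) hle 2

variable {ι κ : Type*}

def setRestrict (S : ι → Finset κ) : (κ → ℝ) →ₗ[ℝ] PiLp 2 (fun i => S i → ℝ) :=
  (WithLp.linearEquiv 2 ℝ _).symm.toLinearMap ∘ₗ
    LinearMap.pi fun i => LinearMap.funLeft ℝ ℝ (Subtype.val : S i → κ)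

theorem setRestrict_apply (S : ι → Finset κ) (x : κ → ℝ) (i : ι) :
    (setRestrict S x).ofLp i = (S i).restrict x := rfl

theorem setRestrict_injective {S : ι → Finset κ} (hcover : ∀ j, ∃ i, j ∈ S i) :
    Function.Injective (setRestrict S) := by
  refine (injective_iff_map_eq_zero _).2 fun x hx => funext fun j => ?_
  obtain ⟨i, hj⟩ := hcover j
  exact congrFun (congrFun (congrArg WithLp.ofLp hx) i) ⟨j, hj⟩

theorem sqrt_sum_sSup_image_sq_eq_norm_setRestrict [Fintype ι] (S : ι → Finset κ) (x : κ → ℝ) :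
    √(∑ i, sSup ((fun j => x j ^ 2) '' (S i : Set κ))) = ‖setRestrict S x‖ := by
  simp only [PiLp.norm_eq_of_L2, setRestrict_apply, sSup_image_sq_eq_norm_restrict_sq]

/-- If every coordinate belongs to at least one set `S i`, then the Set-Max
function `x ↦ √(Σᵢ max_{j ∈ S i} (x j)²)` (max over the empty set being 0) is a norm on
`ℝ^E`. -/
theorem stmt7 (n E : ℕ)
    (S : Fin n → Finset (Fin E))
    (hcover : ∀ ℓ : Fin E, ∃ i, ℓ ∈ S i)
    (SM : (Fin E → ℝ) → ℝ)
    (hSM : ∀ x : Fin E → ℝ,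
      SM x = Real.sqrt (∑ i, sSup ((fun j => (x j) ^ 2) '' (S i : Set (Fin E))))) :
    (∀ x y : Fin E → ℝ, SM (x + y) ≤ SM x + SM y) ∧
    (∀ (c : ℝ) (x : Fin E → ℝ), SM (c • x) = |c| * SM x) ∧
    (∀ x : Fin E → ℝ, SM x = 0 ↔ x = 0) := by
  have hSM' (x : Fin E → ℝ) : SM x = ‖setRestrict S x‖ :=
    (hSM x).trans (sqrt_sum_sSup_image_sq_eq_norm_setRestrict S x)
  simp only [hSM']
  refine ⟨fun x y => ?_, fun c x => ?_, fun x => ?_⟩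
  · simpa only [map_add] using norm_add_le _ _
  · rw [map_smul, norm_smul, Real.norm_eq_abs]
  · rw [norm_eq_zero, (injective_iff_map_eq_zero' _).1 (setRestrict_injective hcover)]
end

section
/- Let S : Fin n → Finset (Fin E) be a set system where every coordinate belongs to exactly two of the sets S i. Define ‖z‖*_SM := sSup { ⟨z, x⟩ : Σ_i max_{j ∈ S i} (x j)² ≤ 1 } and ‖z‖*_SMNO := sSup { ⟨z, x⟩ : Σ_i max_{j ∈ S' i} (x j)² ≤ 1 for every refining partition S' of S } (maxima over empty sets taken as 0). Then for every z, (‖z‖*_SM)² ≥ (1/2)·(‖z‖*_SMNO)². -/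
/-- A refining partition of a set system `S`: a family `S'` with `S' i ⊆ S i`, the sets
pairwise disjoint, and every coordinate belonging to exactly one set `S' i`. -/
def IsRefiningPartition {n E : ℕ} (S S' : Fin n → Finset (Fin E)) : Prop :=
  (∀ i, S' i ⊆ S i) ∧ (∀ ℓ : Fin E, ∃! i, ℓ ∈ S' i)

/-- The dual Set-Max norm dominates `1/√2` times the dual Set-Max
non-overlapping norm: `(‖z‖*_SM)² ≥ (1/2)·(‖z‖*_SMNO)²`. -/
theorem stmt9 (n E : ℕ)
    (S : Fin n → Finset (Fin E))
    (htwo : ∀ ℓ : Fin E, (Finset.univ.filter (fun i => ℓ ∈ S i)).card = 2)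
    (z : Fin E → ℝ) :
    (1 / 2) * (sSup {r : ℝ | ∃ x : Fin E → ℝ,
        (∀ S' : Fin n → Finset (Fin E), IsRefiningPartition S S' →
          ∑ i, sSup ((fun j => (x j) ^ 2) '' (S' i : Set (Fin E))) ≤ 1) ∧
        r = ∑ ℓ, z ℓ * x ℓ}) ^ 2 ≤
      (sSup {r : ℝ | ∃ x : Fin E → ℝ,
        ∑ i, sSup ((fun j => (x j) ^ 2) '' (S i : Set (Fin E))) ≤ 1 ∧
        r = ∑ ℓ, z ℓ * x ℓ}) ^ 2 := by
  classical
  -- the two indices containing each coordinate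
  have hpair : ∀ ℓ : Fin E, ∃ a b : Fin n, a ≠ b ∧
      Finset.univ.filter (fun i => ℓ ∈ S i) = {a, b} := fun ℓ =>
    Finset.card_eq_two.mp (htwo ℓ)
  set f1 : Fin E → Fin n := fun ℓ => (hpair ℓ).choose with hf1
  set f2 : Fin E → Fin n := fun ℓ => (hpair ℓ).choose_spec.choose with hf2
  have hspec : ∀ ℓ, f1 ℓ ≠ f2 ℓ ∧
      Finset.univ.filter (fun i => ℓ ∈ S i) = {f1 ℓ, f2 ℓ} := fun ℓ =>
    (hpair ℓ).choose_spec.choose_spec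
  have hmem : ∀ (ℓ : Fin E) (i : Fin n), ℓ ∈ S i ↔ (i = f1 ℓ ∨ i = f2 ℓ) := by
    intro ℓ i
    have : ℓ ∈ S i ↔ i ∈ Finset.univ.filter (fun i => ℓ ∈ S i) := by
      simp [Finset.mem_filter]
    rw [this, (hspec ℓ).2]
    simp [Finset.mem_insert]
  -- the two refining partitions
  set P1 : Fin n → Finset (Fin E) := fun i => (S i).filter (fun ℓ => f1 ℓ = i) with hP1
  set P2 : Fin n → Finset (Fin E) := fun i => (S i).filter (fun ℓ => f2 ℓ = i) with hP2
  have hmem1 : ∀ ℓ, ℓ ∈ P1 (f1 ℓ) := by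
    intro ℓ
    exact Finset.mem_filter.mpr ⟨(hmem ℓ (f1 ℓ)).mpr (Or.inl rfl), rfl⟩
  have hmem2 : ∀ ℓ, ℓ ∈ P2 (f2 ℓ) := by
    intro ℓ
    exact Finset.mem_filter.mpr ⟨(hmem ℓ (f2 ℓ)).mpr (Or.inr rfl), rfl⟩
  have hRP1 : IsRefiningPartition S P1 := by
    refine ⟨fun i => Finset.filter_subset _ _, fun ℓ => ⟨f1 ℓ, hmem1 ℓ, ?_⟩⟩
    intro i hi
    simp only [hP1, Finset.mem_filter] at hi
    exact hi.2.symm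
  have hRP2 : IsRefiningPartition S P2 := by
    refine ⟨fun i => Finset.filter_subset _ _, fun ℓ => ⟨f2 ℓ, hmem2 ℓ, ?_⟩⟩
    intro i hi
    simp only [hP2, Finset.mem_filter] at hi
    exact hi.2.symm
  -- abbreviation for the max term
  set M : (Fin E → ℝ) → Finset (Fin E) → ℝ :=
    fun x s => sSup ((fun j => (x j) ^ 2) '' (s : Set (Fin E))) with hM
  have hMnonneg : ∀ x s, 0 ≤ M x s := by
    intro x s
    apply Real.sSup_nonneg
    rintro _ ⟨j, _, rfl⟩
    positivity
  have hMle : ∀ (x : Fin E → ℝ) s (j : Fin E), j ∈ s → (x j) ^ 2 ≤ M x s := by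
    intro x s j hj
    exact le_csSup (Set.Finite.bddAbove ((s.finite_toSet).image _)) ⟨j, by simpa using hj, rfl⟩
  have hMmono : ∀ (x : Fin E → ℝ) s t, s ⊆ t → M x s ≤ M x t := by
    intro x s t hst
    apply Real.sSup_le
    · rintro _ ⟨j, hj, rfl⟩
      exact hMle x t j (hst (by simpa using hj))
    · exact hMnonneg x t
  -- a priori coordinate bounds
  have hcoord : ∀ x : Fin E → ℝ, (∑ i, M x (P1 i)) ≤ 1 → ∀ ℓ, (x ℓ) ^ 2 ≤ 1 := by
    intro x hx ℓ
    calc (x ℓ) ^ 2 ≤ M x (P1 (f1 ℓ)) := hMle x _ ℓ (hmem1 ℓ)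
      _ ≤ ∑ i, M x (P1 i) :=
          Finset.single_le_sum (fun i _ => hMnonneg x (P1 i)) (Finset.mem_univ _)
      _ ≤ 1 := hx
  have hsumbound : ∀ x : Fin E → ℝ, (∀ ℓ, (x ℓ) ^ 2 ≤ 1) →
      (∑ ℓ, z ℓ * x ℓ) ≤ ∑ ℓ, |z ℓ| := by
    intro x hx
    apply Finset.sum_le_sum
    intro ℓ _
    have h1 : |x ℓ| ≤ 1 := (sq_le_one_iff_abs_le_one (a := x ℓ)).mp (hx ℓ)
    calc z ℓ * x ℓ ≤ |z ℓ * x ℓ| := le_abs_self _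
      _ = |z ℓ| * |x ℓ| := abs_mul _ _
      _ ≤ |z ℓ| * 1 := by
          exact mul_le_mul_of_nonneg_left h1 (abs_nonneg _)
      _ = |z ℓ| := mul_one _
  -- the two sets
  set TNO : Set ℝ := {r : ℝ | ∃ x : Fin E → ℝ,
      (∀ S' : Fin n → Finset (Fin E), IsRefiningPartition S S' →
        ∑ i, M x (S' i) ≤ 1) ∧ r = ∑ ℓ, z ℓ * x ℓ} with hTNO
  set TSM : Set ℝ := {r : ℝ | ∃ x : Fin E → ℝ,
      (∑ i, M x (S i)) ≤ 1 ∧ r = ∑ ℓ, z ℓ * x ℓ} with hTSM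
  have hbddSM : BddAbove TSM := by
    refine ⟨∑ ℓ, |z ℓ|, ?_⟩
    rintro r ⟨x, hx, rfl⟩
    refine hsumbound x (hcoord x ?_)
    calc ∑ i, M x (P1 i) ≤ ∑ i, M x (S i) :=
          Finset.sum_le_sum fun i _ => hMmono x _ _ (Finset.filter_subset _ _)
      _ ≤ 1 := hx
  have hbddNO : BddAbove TNO := by
    refine ⟨∑ ℓ, |z ℓ|, ?_⟩
    rintro r ⟨x, hx, rfl⟩
    exact hsumbound x (hcoord x (hx P1 hRP1))
  have hMzero : ∀ s, M (fun _ => (0:ℝ)) s = 0 := by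
    intro s
    refine le_antisymm ?_ (hMnonneg _ s)
    apply Real.sSup_le
    · rintro _ ⟨j, _, rfl⟩; simp
    · exact le_refl 0
  have h0SM : (0:ℝ) ∈ TSM := by
    refine ⟨fun _ => 0, ?_, by simp⟩
    simp [hMzero]
  have h0NO : (0:ℝ) ∈ TNO := by
    refine ⟨fun _ => 0, fun S' _ => by simp [hMzero], by simp⟩
  have hB0 : 0 ≤ sSup TSM := le_csSup hbddSM h0SM
  have hA0 : 0 ≤ sSup TNO := le_csSup hbddNO h0NO
  have hsq2 : (0:ℝ) < Real.sqrt 2 := Real.sqrt_pos.mpr (by norm_num)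
  -- key inequality : sSup TNO ≤ √2 * sSup TSM
  have hAB : sSup TNO ≤ Real.sqrt 2 * sSup TSM := by
    apply Real.sSup_le
    · rintro r ⟨x, hx, rfl⟩
      set x' : Fin E → ℝ := fun ℓ => (Real.sqrt 2)⁻¹ * x ℓ with hx'
      have hsq : ((Real.sqrt 2)⁻¹) ^ 2 = 1 / 2 := by
        rw [inv_pow, Real.sq_sqrt (by norm_num : (0:ℝ) ≤ 2)]
        norm_num
      have hfeas : (∑ i, M x' (S i)) ≤ 1 := by
        have hstep : ∀ i, M x' (S i) ≤ (1/2) * (M x (P1 i) + M x (P2 i)) := by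
          intro i
          apply Real.sSup_le
          · rintro _ ⟨j, hj, rfl⟩
            have hj' : j ∈ S i := by simpa using hj
            have hcases := (hmem j i).mp hj'
            have hxx : (x j) ^ 2 ≤ M x (P1 i) + M x (P2 i) := by
              rcases hcases with h | h
              · subst h
                exact le_add_of_le_of_nonneg (hMle x _ j (hmem1 j)) (hMnonneg x _)
              · subst h
                exact le_add_of_nonneg_of_le (hMnonneg x _) (hMle x _ j (hmem2 j))
            have heq : (x' j) ^ 2 = (1/2) * (x j) ^ 2 := by
              simp only [hx', mul_pow, hsq]
            show (x' j) ^ 2 ≤ 1/2 * (M x (P1 i) + M x (P2 i))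
            rw [heq]
            nlinarith [hMnonneg x (P1 i), hMnonneg x (P2 i)]
          · have := hMnonneg x (P1 i)
            have := hMnonneg x (P2 i)
            nlinarith
        calc ∑ i, M x' (S i) ≤ ∑ i, (1/2) * (M x (P1 i) + M x (P2 i)) :=
              Finset.sum_le_sum fun i _ => hstep i
          _ = (1/2) * ((∑ i, M x (P1 i)) + ∑ i, M x (P2 i)) := by
              rw [← Finset.mul_sum, Finset.sum_add_distrib]
          _ ≤ (1/2) * (1 + 1) := by
              have h1 := hx P1 hRP1
              have h2 := hx P2 hRP2
              nlinarith
          _ = 1 := by norm_num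
      have hmemSM : (Real.sqrt 2)⁻¹ * (∑ ℓ, z ℓ * x ℓ) ∈ TSM := by
        refine ⟨x', hfeas, ?_⟩
        rw [Finset.mul_sum]
        apply Finset.sum_congr rfl
        intro ℓ _
        simp only [hx']
        ring
      have hle : (Real.sqrt 2)⁻¹ * (∑ ℓ, z ℓ * x ℓ) ≤ sSup TSM := le_csSup hbddSM hmemSM
      calc (∑ ℓ, z ℓ * x ℓ)
          = Real.sqrt 2 * ((Real.sqrt 2)⁻¹ * (∑ ℓ, z ℓ * x ℓ)) := by
            field_simp
        _ ≤ Real.sqrt 2 * sSup TSM := by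
            exact mul_le_mul_of_nonneg_left hle (le_of_lt hsq2)
    · positivity
  -- conclude
  have hfin : (sSup TNO) ^ 2 ≤ 2 * (sSup TSM) ^ 2 := by
    have := pow_le_pow_left₀ hA0 hAB 2
    calc (sSup TNO) ^ 2 ≤ (Real.sqrt 2 * sSup TSM) ^ 2 := this
      _ = 2 * (sSup TSM) ^ 2 := by
          rw [mul_pow, Real.sq_sqrt (by norm_num : (0:ℝ) ≤ 2)]
  linarith
end

section
/- Let S : Fin n → Finset (Fin E) be a set system where every coordinate belongs to exactly two of the sets S i. Then for every x : Fin E → ℝ there exists a refining partition S' of S such that Σ_{i} max_{j ∈ S' i} (x j)² ≥ (1/2)·Σ_{i} max_{j ∈ S i} (x j)², where the maximum over an empty set is 0. -/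
/-- For any `x` there is a refining partition of the set system retaining
at least half of the Set-Max sum. -/
theorem stmt10 (n E : ℕ)
    (S : Fin n → Finset (Fin E))
    (htwo : ∀ ℓ : Fin E, (Finset.univ.filter (fun i => ℓ ∈ S i)).card = 2)
    (x : Fin E → ℝ) :
    ∃ S' : Fin n → Finset (Fin E), IsRefiningPartition S S' ∧
      (1 / 2) * ∑ i, sSup ((fun j => (x j) ^ 2) '' (S i : Set (Fin E))) ≤
        ∑ i, sSup ((fun j => (x j) ^ 2) '' (S' i : Set (Fin E))) := by
  classical
  set w : Fin E → ℝ := fun j => (x j) ^ 2 with hw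
  have hpair : ∀ ℓ : Fin E, ∃ p : Fin n × Fin n, p.1 ≠ p.2 ∧
      (Finset.univ.filter (fun i => ℓ ∈ S i)) = {p.1, p.2} := by
    intro ℓ
    obtain ⟨a, b, hab, h⟩ := Finset.card_eq_two.mp (htwo ℓ)
    exact ⟨(a, b), hab, h⟩
  choose p hne hset using hpair
  set f : Fin E → Fin n := fun ℓ => (p ℓ).1 with hf
  set g : Fin E → Fin n := fun ℓ => (p ℓ).2 with hg
  have hmemf : ∀ ℓ, ℓ ∈ S (f ℓ) := by
    intro ℓ
    have h1 : f ℓ ∈ Finset.univ.filter (fun i => ℓ ∈ S i) := by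
      rw [hset ℓ]; simp [hf]
    simpa using (Finset.mem_filter.mp h1).2
  have hmemg : ∀ ℓ, ℓ ∈ S (g ℓ) := by
    intro ℓ
    have h1 : g ℓ ∈ Finset.univ.filter (fun i => ℓ ∈ S i) := by
      rw [hset ℓ]; simp [hg]
    simpa using (Finset.mem_filter.mp h1).2
  have hcov : ∀ ℓ i, ℓ ∈ S i → i = f ℓ ∨ i = g ℓ := by
    intro ℓ i hi
    have h1 : i ∈ Finset.univ.filter (fun i => ℓ ∈ S i) := by simp [hi]
    rw [hset ℓ] at h1
    simpa [hf, hg] using h1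
  set A : Fin n → Finset (Fin E) := fun i => (S i).filter (fun ℓ => f ℓ = i) with hA
  set B : Fin n → Finset (Fin E) := fun i => (S i).filter (fun ℓ => g ℓ = i) with hB
  have hAref : IsRefiningPartition S A := by
    constructor
    · intro i; exact Finset.filter_subset _ _
    · intro ℓ
      refine ⟨f ℓ, ?_, ?_⟩
      · simp [hA, hmemf ℓ]
      · intro i hi
        simp only [hA, Finset.mem_filter] at hi
        exact hi.2.symm
  have hBref : IsRefiningPartition S B := by
    constructor
    · intro i; exact Finset.filter_subset _ _
    · intro ℓ
      refine ⟨g ℓ, ?_, ?_⟩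
      · simp [hB, hmemg ℓ]
      · intro i hi
        simp only [hB, Finset.mem_filter] at hi
        exact hi.2.symm
  -- nonnegativity of the suprema
  have hnn : ∀ t : Finset (Fin E), 0 ≤ sSup (w '' (t : Set (Fin E))) := by
    intro t
    rcases t.eq_empty_or_nonempty with rfl | ⟨j, hj⟩
    · simp [Real.sSup_empty]
    · have hbdd : BddAbove (w '' (t : Set (Fin E))) := (t.finite_toSet.image w).bddAbove
      have hmem : w j ∈ w '' (t : Set (Fin E)) := ⟨j, hj, rfl⟩
      have : (0 : ℝ) ≤ w j := by simp [hw]; positivity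
      exact this.trans (le_csSup hbdd hmem)
  -- the key pointwise bound
  have key : ∀ i, sSup (w '' (S i : Set (Fin E))) ≤
      sSup (w '' (A i : Set (Fin E))) + sSup (w '' (B i : Set (Fin E))) := by
    intro i
    rcases (S i).eq_empty_or_nonempty with he | hne'
    · rw [he]; simpa [Real.sSup_empty] using add_nonneg (hnn (A i)) (hnn (B i))
    · obtain ⟨a, ha, hmax⟩ := (S i).exists_max_image w hne'
      have h1 : sSup (w '' (S i : Set (Fin E))) ≤ w a := by
        apply csSup_le (by exact ⟨w a, a, ha, rfl⟩)
        rintro y ⟨j, hj, rfl⟩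
        exact hmax j hj
      rcases hcov a i ha with hfa | hga
      · have haA : a ∈ A i := by simp [hA, ha, hfa.symm]
        have h2 : w a ≤ sSup (w '' (A i : Set (Fin E))) :=
          le_csSup ((A i).finite_toSet.image w).bddAbove ⟨a, haA, rfl⟩
        linarith [hnn (B i)]
      · have haB : a ∈ B i := by simp [hB, ha, hga.symm]
        have h2 : w a ≤ sSup (w '' (B i : Set (Fin E))) :=
          le_csSup ((B i).finite_toSet.image w).bddAbove ⟨a, haB, rfl⟩
        linarith [hnn (A i)]
  have hsum : ∑ i, sSup (w '' (S i : Set (Fin E))) ≤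
      (∑ i, sSup (w '' (A i : Set (Fin E)))) + ∑ i, sSup (w '' (B i : Set (Fin E))) := by
    rw [← Finset.sum_add_distrib]
    exact Finset.sum_le_sum fun i _ => key i
  by_cases hc : (∑ i, sSup (w '' (B i : Set (Fin E)))) ≤ ∑ i, sSup (w '' (A i : Set (Fin E)))
  · exact ⟨A, hAref, by linarith⟩
  · exact ⟨B, hBref, by linarith⟩
end

section
/- Let S' : Fin n → Finset (Fin E) be a family of pairwise disjoint sets whose union is all of Fin E (some possibly empty). Then for every z : Fin E → ℝ, sSup { ⟨z, x⟩ : x : Fin E → ℝ, Σ_{i} max_{j ∈ S' i} (x j)² ≤ 1 } = Real.sqrt (Σ_{i} (Σ_{j ∈ S' i} |z j|)²), i.e. the dual of the block ℓ₂-of-ℓ∞ norm induced by the partition is the block ℓ₂-of-ℓ₁ norm. -/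
/-- sSup of the image of a finset under a function that is constant (equal to `c`)
on the finset, where `c = 0` if the finset is empty. -/
lemma sSup_image_finset_const {α : Type*} (s : Finset α) (f : α → ℝ) (c : ℝ)
    (h : ∀ j ∈ s, f j = c) (hc : s = ∅ → c = 0) :
    sSup (f '' (s : Set α)) = c := by
  rcases eq_or_ne s ∅ with hs | hs
  · simp [hs, Real.sSup_empty, hc hs]
  · have hne : s.Nonempty := Finset.nonempty_iff_ne_empty.mpr hs
    have : f '' (s : Set α) = {c} := by
      ext y
      constructor
      · rintro ⟨j, hj, rfl⟩
        exact h j hj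
      · rintro rfl
        exact ⟨hne.choose, hne.choose_spec, h _ hne.choose_spec⟩
    rw [this, csSup_singleton]

/-- For a partition `S'` of the coordinates, the dual of the block
ℓ₂-of-ℓ∞ norm is the block ℓ₂-of-ℓ₁ norm. -/
theorem stmt11 (n E : ℕ)
    (S' : Fin n → Finset (Fin E))
    (hpart : ∀ ℓ : Fin E, ∃! i, ℓ ∈ S' i)
    (z : Fin E → ℝ) :
    sSup {r : ℝ | ∃ x : Fin E → ℝ,
        ∑ i, sSup ((fun j => (x j) ^ 2) '' (S' i : Set (Fin E))) ≤ 1 ∧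
        r = ∑ ℓ, z ℓ * x ℓ}
      = Real.sqrt (∑ i, (∑ j ∈ S' i, |z j|) ^ 2) := by
  classical
  choose ind hmem huniq using hpart
  set A : Fin n → ℝ := fun i => ∑ j ∈ S' i, |z j| with hA
  have hAnn : ∀ i, 0 ≤ A i := fun i => Finset.sum_nonneg fun j _ => abs_nonneg _
  set R : ℝ := Real.sqrt (∑ i, A i ^ 2) with hR
  have hRnn : 0 ≤ R := Real.sqrt_nonneg _
  -- fibers
  have hfib : ∀ i, S' i = Finset.univ.filter (fun j => ind j = i) := by
    intro i
    ext j
    simp only [Finset.mem_filter, Finset.mem_univ, true_and]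
    constructor
    · intro hj; exact (huniq j i hj).symm
    · intro hj; rw [← hj]; exact hmem j
  have hregroup : ∀ f : Fin E → ℝ, ∑ ℓ, f ℓ = ∑ i, ∑ j ∈ S' i, f j := by
    intro f
    have : ∑ i, ∑ j ∈ S' i, f j
        = ∑ i, ∑ j ∈ Finset.univ.filter (fun j => ind j = i), f j := by
      refine Finset.sum_congr rfl fun i _ => ?_
      rw [hfib i]
    rw [this, Finset.sum_fiberwise]
  -- `R` is an upper bound of the set
  have hub : ∀ r ∈ {r : ℝ | ∃ x : Fin E → ℝ,
      ∑ i, sSup ((fun j => (x j) ^ 2) '' (S' i : Set (Fin E))) ≤ 1 ∧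
      r = ∑ ℓ, z ℓ * x ℓ}, r ≤ R := by
    rintro r ⟨x, hx1, rfl⟩
    set b : Fin n → ℝ := fun i => sSup ((fun j => (x j) ^ 2) '' (S' i : Set (Fin E))) with hb
    have hbdd : ∀ i, BddAbove ((fun j => (x j) ^ 2) '' (S' i : Set (Fin E))) := fun i =>
      ((S' i).finite_toSet.image _).bddAbove
    have hble : ∀ i, ∀ j ∈ S' i, x j ^ 2 ≤ b i := fun i j hj =>
      le_csSup (hbdd i) ⟨j, hj, rfl⟩
    have hbnn : ∀ i, 0 ≤ b i := by
      intro i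
      rcases (S' i).eq_empty_or_nonempty with hs | ⟨j, hj⟩
      · simp [hb, hs, Real.sSup_empty]
      · exact le_trans (sq_nonneg (x j)) (hble i j hj)
    set m : Fin n → ℝ := fun i => Real.sqrt (b i) with hm
    have hxm : ∀ i, ∀ j ∈ S' i, |x j| ≤ m i := by
      intro i j hj
      rw [← Real.sqrt_sq_eq_abs]
      exact Real.sqrt_le_sqrt (hble i j hj)
    have step1 : ∑ ℓ, z ℓ * x ℓ ≤ ∑ i, A i * m i := by
      rw [hregroup (fun ℓ => z ℓ * x ℓ)]
      refine Finset.sum_le_sum fun i _ => ?_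
      calc ∑ j ∈ S' i, z j * x j ≤ ∑ j ∈ S' i, |z j| * m i := by
            refine Finset.sum_le_sum fun j hj => ?_
            calc z j * x j ≤ |z j * x j| := le_abs_self _
              _ = |z j| * |x j| := abs_mul _ _
              _ ≤ |z j| * m i := by
                  exact mul_le_mul_of_nonneg_left (hxm i j hj) (abs_nonneg _)
        _ = A i * m i := by rw [← Finset.sum_mul]
    have step2 : ∑ i, A i * m i ≤ R := by
      have hcs := Finset.sum_mul_sq_le_sq_mul_sq Finset.univ A m
      have hm2 : ∑ i, m i ^ 2 = ∑ i, b i := by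
        refine Finset.sum_congr rfl fun i _ => Real.sq_sqrt (hbnn i)
      have hsum_nn : 0 ≤ ∑ i, A i * m i :=
        Finset.sum_nonneg fun i _ => mul_nonneg (hAnn i) (Real.sqrt_nonneg _)
      have h2 : (∑ i, A i * m i) ^ 2 ≤ ∑ i, A i ^ 2 := by
        calc (∑ i, A i * m i) ^ 2 ≤ (∑ i, A i ^ 2) * ∑ i, m i ^ 2 := hcs
          _ ≤ (∑ i, A i ^ 2) * 1 := by
              refine mul_le_mul_of_nonneg_left ?_
                (Finset.sum_nonneg fun i _ => sq_nonneg _)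
              rw [hm2]; exact hx1
          _ = ∑ i, A i ^ 2 := mul_one _
      exact Real.le_sqrt_of_sq_le h2
    exact le_trans step1 step2
  -- `R` is a member of the set
  have hmemR : R ∈ {r : ℝ | ∃ x : Fin E → ℝ,
      ∑ i, sSup ((fun j => (x j) ^ 2) '' (S' i : Set (Fin E))) ≤ 1 ∧
      r = ∑ ℓ, z ℓ * x ℓ} := by
    rcases eq_or_ne (∑ i, A i ^ 2) 0 with hzero | hnz
    · -- all A i = 0, hence z = 0; take x = 0
      refine ⟨0, ?_, ?_⟩
      · have : ∀ i, sSup ((fun j => ((0 : Fin E → ℝ) j) ^ 2) '' (S' i : Set (Fin E))) = 0 :=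
          fun i => sSup_image_finset_const _ _ 0 (fun j _ => by norm_num) (fun _ => rfl)
        simp only [this, Finset.sum_const, smul_zero]
        norm_num
      · simp [hR, hzero]
    · have hpos : 0 < ∑ i, A i ^ 2 :=
        lt_of_le_of_ne (Finset.sum_nonneg fun i _ => sq_nonneg _) (Ne.symm hnz)
      have hRpos : 0 < R := Real.sqrt_pos.mpr hpos
      have hRR : R * R = ∑ i, A i ^ 2 := Real.mul_self_sqrt (le_of_lt hpos)
      set x : Fin E → ℝ := fun j => (if z j < 0 then (-1 : ℝ) else 1) * A (ind j) / R with hx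
      have hxsq : ∀ j, x j ^ 2 = A (ind j) ^ 2 / R ^ 2 := by
        intro j
        rw [hx]
        rcases lt_or_ge (z j) 0 with h | h <;> simp [h, div_pow, mul_pow]
      have hzx : ∀ j, z j * x j = |z j| * A (ind j) / R := by
        intro j
        rw [hx]
        rcases lt_or_ge (z j) 0 with h | h
        · rw [abs_of_neg h]; simp [h]; ring
        · rw [abs_of_nonneg h]; simp [not_lt.mpr h]; ring
      refine ⟨x, ?_, ?_⟩
      · have hsup : ∀ i, sSup ((fun j => (x j) ^ 2) '' (S' i : Set (Fin E)))
            = A i ^ 2 / R ^ 2 := by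
          intro i
          refine sSup_image_finset_const _ _ _ (fun j hj => ?_) (fun hs => ?_)
          · rw [hxsq j, huniq j i hj]
          · have : A i = 0 := by rw [hA]; simp [hs]
            rw [this]; norm_num
        refine le_of_eq ?_
        calc ∑ i, sSup ((fun j => (x j) ^ 2) '' (S' i : Set (Fin E)))
            = ∑ i, A i ^ 2 / R ^ 2 := Finset.sum_congr rfl fun i _ => hsup i
          _ = (∑ i, A i ^ 2) / R ^ 2 := by rw [Finset.sum_div]
          _ = 1 := by
              rw [← hRR, sq]
              exact div_self (mul_ne_zero hRpos.ne' hRpos.ne')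
      · rw [hregroup (fun ℓ => z ℓ * x ℓ)]
        have : ∀ i, ∑ j ∈ S' i, z j * x j = A i ^ 2 / R := by
          intro i
          calc ∑ j ∈ S' i, z j * x j = ∑ j ∈ S' i, |z j| * A i / R := by
                refine Finset.sum_congr rfl fun j hj => ?_
                rw [hzx j, huniq j i hj]
            _ = (∑ j ∈ S' i, |z j|) * A i / R := by
                rw [← Finset.sum_div, ← Finset.sum_mul]
            _ = A i ^ 2 / R := by rw [hA]; ring
        rw [Finset.sum_congr rfl fun i _ => this i, ← Finset.sum_div, ← hRR,
          mul_div_assoc, div_self hRpos.ne', mul_one]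
  exact le_antisymm (csSup_le ⟨R, hmemR⟩ hub) (le_csSup ⟨R, hub⟩ hmemR)
end

section
/- Let F : EuclideanSpace ℝ (Fin E) → ℝ be differentiable with L-Lipschitz gradient (L > 0), and let S : Fin n → Finset (Fin E) be a set system (each S i nonempty, every coordinate in exactly two sets). For each i let ℓ_i ∈ S i be an index maximizing ((∇F(λ))_ℓ)² over ℓ ∈ S i. Then the expected progress of the set-wise Gauss-Southwell step satisfies (1/n)·Σ_{i : Fin n} F(λ − (1/L)·(∇F(λ))_{ℓ_i} • e_{ℓ_i}) ≤ F(λ) − (1/(2·L·n))·Σ_{i : Fin n} max_{ℓ ∈ S i} ((∇F(λ))_ℓ)². -/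
/-!
By the descent lemma, a `1 / L`-step along the coordinate `ℓ` decreases an `L`-smooth `F` by at
least `(∇F(λ))_ℓ ^ 2 / (2L)`. For the set-wise Gauss-Southwell choice this square is the maximum
over `S i`, and averaging over the `n` sets gives the bound.
-/

open InnerProductSpace
open scoped NNReal Gradient

section Descent

variable {H : Type*} [NormedAddCommGroup H] [InnerProductSpace ℝ H] [CompleteSpace H]
  {F : H → ℝ} {K : ℝ≥0}

theorem hasDerivAt_apply_add_smul {x v : H} {t : ℝ} (hF : DifferentiableAt ℝ F (x + t • v)) :
    HasDerivAt (fun s : ℝ => F (x + s • v)) ⟪∇ F (x + t • v), v⟫_ℝ t := by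
  have hline : HasDerivAt (fun s : ℝ => x + s • v) v t := by
    simpa using ((hasDerivAt_id t).smul_const v).const_add x
  rw [inner_gradient_left]
  exact hF.hasFDerivAt.comp_hasDerivAt t hline

theorem inner_gradient_sub_le (hlip : LipschitzWith K (∇ F)) (x y v : H) :
    ⟪∇ F y - ∇ F x, v⟫_ℝ ≤ K * ‖y - x‖ * ‖v‖ := by
  calc ⟪∇ F y - ∇ F x, v⟫_ℝ ≤ ‖∇ F y - ∇ F x‖ * ‖v‖ := real_inner_le_norm _ _
    _ ≤ K * ‖y - x‖ * ‖v‖ := by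
      gcongr
      simpa only [dist_eq_norm] using hlip.dist_le_mul y x

theorem apply_add_le_of_lipschitzWith_gradient_s13 (hF : Differentiable ℝ F)
    (hlip : LipschitzWith K (∇ F)) (x v : H) :
    F (x + v) ≤ F x + ⟪∇ F x, v⟫_ℝ + K / 2 * ‖v‖ ^ 2 := by
  have hderiv (t : ℝ) := hasDerivAt_apply_add_smul (x := x) (v := v) (t := t) (hF _)
  have hbound (t : ℝ) : HasDerivAt (fun s : ℝ => F x + s * ⟪∇ F x, v⟫_ℝ + K / 2 * ‖v‖ ^ 2 * s ^ 2)
      (⟪∇ F x, v⟫_ℝ + K * ‖v‖ ^ 2 * t) t := by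
    refine (((hasDerivAt_id t).mul_const ⟪∇ F x, v⟫_ℝ).const_add (F x) |>.add
      ((hasDerivAt_pow 2 t).const_mul (K / 2 * ‖v‖ ^ 2))).congr_deriv ?_
    push_cast
    ring
  have key := image_le_of_deriv_right_le_deriv_boundary
    (f := fun s : ℝ => F (x + s • v)) (a := 0) (b := 1)
    (fun t _ => (hderiv t).continuousAt.continuousWithinAt)
    (fun t _ => (hderiv t).hasDerivWithinAt) (by simp)
    (fun t _ => (hbound t).continuousAt.continuousWithinAt)
    (fun t _ => (hbound t).hasDerivWithinAt)
    (fun t ht => by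
      have h := inner_gradient_sub_le hlip x (x + t • v) v
      rw [inner_sub_left, add_sub_cancel_left, norm_smul, Real.norm_of_nonneg ht.1] at h
      nlinarith)
    (Set.right_mem_Icc.2 zero_le_one)
  simpa using key

theorem apply_sub_inner_gradient_smul_le_s13 (hF : Differentiable ℝ F)
    (hlip : LipschitzWith K (∇ F)) (hK : 0 < K) (x : H) {u : H} (hu : ‖u‖ = 1) :
    F (x - ((1 / K) * ⟪∇ F x, u⟫_ℝ) • u) ≤ F x - ⟪∇ F x, u⟫_ℝ ^ 2 / (2 * K) := by
  have hK' : (K : ℝ) ≠ 0 := by positivity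
  have h := apply_add_le_of_lipschitzWith_gradient_s13 hF hlip x (-(((1 / K) * ⟪∇ F x, u⟫_ℝ) • u))
  rw [← sub_eq_add_neg, inner_neg_right, real_inner_smul_right, norm_neg, norm_smul, hu,
    Real.norm_eq_abs, mul_one, sq_abs] at h
  calc _ ≤ _ := h
    _ = _ := by field_simp; ring

end Descent

theorem inner_gradient_single_one {ι : Type*} [Fintype ι] [DecidableEq ι]
    (F : EuclideanSpace ℝ ι → ℝ) (x : EuclideanSpace ℝ ι) (i : ι) :
    ⟪∇ F x, EuclideanSpace.single i (1 : ℝ)⟫_ℝ = ∇ F x i := by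
  rw [EuclideanSpace.inner_single_right]
  simp

theorem stmt13_general (n E : ℕ) (hn : 0 < n)
    (F : EuclideanSpace ℝ (Fin E) → ℝ) (L : ℝ) (hL : 0 < L)
    (hdiff : Differentiable ℝ F)
    (hlip : LipschitzWith L.toNNReal (gradient F))
    (S : Fin n → Finset (Fin E))
    (lam : EuclideanSpace ℝ (Fin E))
    (ℓsel : Fin n → Fin E)
    (hsel : ∀ i, ℓsel i ∈ S i ∧
      ∀ m ∈ S i, (gradient F lam m) ^ 2 ≤ (gradient F lam (ℓsel i)) ^ 2) :
    (1 / (n : ℝ)) * ∑ i, F (lam -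
        ((1 / L) * gradient F lam (ℓsel i)) • EuclideanSpace.single (ℓsel i) (1 : ℝ)) ≤
      F lam - (1 / (2 * L * n)) *
        ∑ i, sSup ((fun ℓ => (gradient F lam ℓ) ^ 2) '' (S i : Set (Fin E))) := by
  have hstep (i : Fin n) := apply_sub_inner_gradient_smul_le_s13 hdiff hlip
    (Real.toNNReal_pos.2 hL) lam (u := EuclideanSpace.single (ℓsel i) (1 : ℝ)) (by simp)
  simp only [inner_gradient_single_one, Real.coe_toNNReal L hL.le] at hstep
  have hsup (i : Fin n) :
      sSup ((fun ℓ => (∇ F lam ℓ) ^ 2) '' (S i : Set (Fin E))) = (∇ F lam (ℓsel i)) ^ 2 :=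
    IsGreatest.csSup_eq ⟨Set.mem_image_of_mem _ (hsel i).1,
      by rintro _ ⟨m, hm, rfl⟩; exact (hsel i).2 m hm⟩
  have hn' : (n : ℝ) ≠ 0 := by positivity
  calc _ ≤ (1 / (n : ℝ)) * ∑ i, (F lam - (∇ F lam (ℓsel i)) ^ 2 / (2 * L)) := by
        gcongr with i
        exact hstep i
    _ = F lam - (1 / (2 * L * n)) * ∑ i, (∇ F lam (ℓsel i)) ^ 2 := by
        rw [Finset.sum_sub_distrib, Finset.sum_const, Finset.card_univ, Fintype.card_fin,
          ← Finset.sum_div, nsmul_eq_mul]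
        field_simp
    _ = _ := by simp_rw [hsup]

/-- Expected progress of one step of set-wise Gauss-Southwell coordinate
descent (SGS-CD) on an `L`-smooth function: the activated set `i` updates a coordinate
`ℓsel i ∈ S i` with largest squared gradient component. -/
theorem stmt13 (n E : ℕ) (hn : 0 < n)
    (F : EuclideanSpace ℝ (Fin E) → ℝ) (L : ℝ) (hL : 0 < L)
    (hdiff : Differentiable ℝ F)
    (hlip : LipschitzWith L.toNNReal (gradient F))
    (S : Fin n → Finset (Fin E))
    (hne : ∀ i, (S i).Nonempty)
    (htwo : ∀ ℓ : Fin E, (Finset.univ.filter (fun i => ℓ ∈ S i)).card = 2)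
    (lam : EuclideanSpace ℝ (Fin E))
    (ℓsel : Fin n → Fin E)
    (hsel : ∀ i, ℓsel i ∈ S i ∧
      ∀ m ∈ S i, (gradient F lam m) ^ 2 ≤ (gradient F lam (ℓsel i)) ^ 2) :
    (1 / (n : ℝ)) * ∑ i, F (lam -
        ((1 / L) * gradient F lam (ℓsel i)) • EuclideanSpace.single (ℓsel i) (1 : ℝ)) ≤
      F lam - (1 / (2 * L * n)) *
        ∑ i, sSup ((fun ℓ => (gradient F lam ℓ) ^ 2) '' (S i : Set (Fin E))) :=
  stmt13_general n E hn F L hL hdiff hlip S lam ℓsel hsel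
end

section
/- (Consensus duality.) Let A : Matrix (Fin n) (Fin E) ℝ be an oriented incidence matrix of a graph with n nodes and E edges: for each ℓ : Fin E there are distinct i(ℓ), j(ℓ) : Fin n with A_{i(ℓ),ℓ} = 1, A_{j(ℓ),ℓ} = −1, and all other entries of column ℓ equal to 0. For each i : Fin n let f_i : ℝ → ℝ be convex and μ_i-strongly convex with μ_i > 0, and let f_i*(y) = ⨆_{x : ℝ} (y·x − f_i(x)) be its Fenchel conjugate. Then sInf { Σ_i f_i(θ i) : θ : Fin n → ℝ, Aᵀ.mulVec θ = 0 } = − sInf { Σ_i f_i*((A.mulVec λ)_i) : λ : Fin E → ℝ }, i.e. strong duality holds between the consensus-constrained primal problem and the dual problem in the edge variables. -/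
/-!
Strong convexity puts a quadratic below each `f i`, so the conjugates are finite and the primal
objective `F θ = ∑ i, f i (θ i)` is coercive; it therefore attains its minimum on `ker Aᵀ` at
some `θ`. Since `F` is separable, its subgradients at `θ` form the box `∏ i, [f i'₋, f i'₊]` of
one-sided derivatives, and minimality along each direction `d ∈ ker Aᵀ` says that some point of
the box has nonnegative inner product with `d`. Separating the box from `range A` by Hahn–Banach
then produces a subgradient of the form `A λ`. For this `λ` the Fenchel–Young inequality is an
equality at `θ`, while `(A λ) ⬝ᵥ θ = λ ⬝ᵥ Aᵀ θ = 0` gives weak duality for every `λ`.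
-/

open Matrix Set Filter

namespace ConvexOn

variable {f : ℝ → ℝ}

lemma add_mul_sub_le_of_leftDeriv_le_of_le_rightDeriv (hf : ConvexOn ℝ univ f) {x g : ℝ}
    (hl : derivWithin f (Iio x) x ≤ g) (hr : g ≤ derivWithin f (Ioi x) x) (y : ℝ) :
    f x + g * (y - x) ≤ f y := by
  have hx : x ∈ interior univ := by simp
  rcases lt_trichotomy y x with hyx | rfl | hxy
  · have := (hf.slope_le_leftDeriv_of_mem_interior (mem_univ y) hx hyx).trans hl
    rw [slope_def_field, div_le_iff₀ (sub_pos.2 hyx)] at this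
    linarith
  · simp
  · have := hr.trans (hf.rightDeriv_le_slope_of_mem_interior hx (mem_univ y) hxy)
    rw [slope_def_field, le_div_iff₀ (sub_pos.2 hxy)] at this
    linarith

lemma exists_quadratic_le {μ : ℝ} (hf : ConvexOn ℝ univ fun x => f x - μ / 2 * x ^ 2) :
    ∃ a b : ℝ, ∀ x, a * x + b + μ / 2 * x ^ 2 ≤ f x := by
  have hmem : (0 : ℝ) ∈ interior univ := by simp
  refine ⟨derivWithin (fun x => f x - μ / 2 * x ^ 2) (Ioi 0) 0, f 0, fun x => ?_⟩
  have := hf.add_mul_sub_le_of_leftDeriv_le_of_le_rightDeriv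
    (hf.leftDeriv_le_rightDeriv_of_mem_interior hmem) le_rfl x
  simp only [sub_zero] at this
  linarith

lemma hasDerivWithinAt_comp_add_mul (hf : ConvexOn ℝ univ f) (x d : ℝ) :
    HasDerivWithinAt (fun t => f (x + t * d))
      ((if 0 ≤ d then derivWithin f (Ioi x) x else derivWithin f (Iio x) x) * d) (Ioi 0) 0 := by
  have hx : x ∈ interior univ := by simp
  have hline : HasDerivWithinAt (fun t : ℝ => x + t * d) d (Ioi 0) 0 := by
    simpa using ((hasDerivAt_id (0 : ℝ)).mul_const d).const_add x |>.hasDerivWithinAt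
  rcases lt_trichotomy d 0 with hd | rfl | hd
  · rw [if_neg hd.not_ge]
    refine (hf.hasDerivWithinAt_leftDeriv_of_mem_interior hx).comp_of_eq 0 hline
      (fun t (ht : 0 < t) => ?_) (by simp)
    show x + t * d < x
    nlinarith
  · simpa using hasDerivWithinAt_const (0 : ℝ) (Ioi 0) (f x)
  · rw [if_pos hd.le]
    refine (hf.hasDerivWithinAt_rightDeriv_of_mem_interior hx).comp_of_eq 0 hline
      (fun t (ht : 0 < t) => ?_) (by simp)
    show x < x + t * d
    nlinarith

end ConvexOn

lemma mul_sub_sq_le {μ : ℝ} (hμ : 0 < μ) (b x : ℝ) : b * x - μ / 2 * x ^ 2 ≤ b ^ 2 / (2 * μ) := by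
  rw [le_div_iff₀ (by positivity)]
  nlinarith [sq_nonneg (μ * x - b)]

section QuadraticMinorant

variable {f : ℝ → ℝ} {a b μ : ℝ}

lemma bddAbove_range_mul_sub_of_quadratic_le (hμ : 0 < μ)
    (hq : ∀ x, a * x + b + μ / 2 * x ^ 2 ≤ f x) (y : ℝ) :
    BddAbove (range fun x => y * x - f x) := by
  refine ⟨(y - a) ^ 2 / (2 * μ) - b, forall_mem_range.2 fun x => ?_⟩
  linarith [hq x, mul_sub_sq_le hμ (y - a) x]

lemma bddBelow_range_of_quadratic_le (hμ : 0 < μ) (hq : ∀ x, a * x + b + μ / 2 * x ^ 2 ≤ f x) :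
    BddBelow (range f) := by
  refine ⟨b - a ^ 2 / (2 * μ), forall_mem_range.2 fun x => ?_⟩
  have := mul_sub_sq_le hμ (-a) x
  rw [neg_sq] at this
  linarith [hq x]

lemma tendsto_cocompact_atTop_of_quadratic_le (hμ : 0 < μ)
    (hq : ∀ x, a * x + b + μ / 2 * x ^ 2 ≤ f x) : Tendsto f (cocompact ℝ) atTop := by
  have hsq : Tendsto (fun x : ℝ => μ / 4 * x ^ 2 + (b - a ^ 2 / μ)) (cocompact ℝ) atTop := by
    refine tendsto_atTop_add_const_right _ _ (Tendsto.const_mul_atTop (by positivity) ?_)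
    simpa only [Function.comp_def, Real.norm_eq_abs, sq_abs] using
      (tendsto_pow_atTop two_ne_zero).comp (tendsto_norm_cocompact_atTop (E := ℝ))
  refine tendsto_atTop_mono (fun x => ?_) hsq
  have := mul_sub_sq_le (half_pos hμ) (-a) x
  rw [neg_sq, show 2 * (μ / 2) = μ by ring] at this
  linarith [hq x]

end QuadraticMinorant

lemma HasDerivWithinAt.nonneg_of_forall_gt_le {φ : ℝ → ℝ} {φ' x : ℝ}
    (h : HasDerivWithinAt φ φ' (Ioi x) x) (hmin : ∀ t, x < t → φ x ≤ φ t) : 0 ≤ φ' := by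
  refine ge_of_tendsto ((hasDerivWithinAt_iff_tendsto_slope' self_notMem_Ioi).mp h) ?_
  filter_upwards [self_mem_nhdsWithin] with t (ht : x < t)
  rw [slope_def_field]
  exact div_nonneg (sub_nonneg.2 (hmin t ht)) (sub_nonneg.2 ht.le)

lemma tendsto_sum_apply_cocompact_atTop {ι : Type*} [Fintype ι] {g : ι → ℝ → ℝ}
    (hbdd : ∀ i, BddBelow (range (g i))) (htend : ∀ i, Tendsto (g i) (cocompact ℝ) atTop) :
    Tendsto (fun θ : ι → ℝ => ∑ i, g i (θ i)) (cocompact (ι → ℝ)) atTop := by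
  classical
  choose m hm using hbdd
  rw [← coprodᵢ_cocompact, Filter.coprodᵢ, tendsto_iSup]
  intro i
  simp_rw [← Finset.add_sum_erase _ _ (Finset.mem_univ i)]
  refine tendsto_atTop_add_right_of_le _ (∑ j ∈ Finset.univ.erase i, m j)
    ((htend i).comp tendsto_comap) fun θ => Finset.sum_le_sum fun j _ => hm j ⟨θ j, rfl⟩

lemma Matrix.mulVec_dotProduct_eq_zero {m n : Type*} [Fintype m] [Fintype n]
    (A : Matrix m n ℝ) {θ : m → ℝ} (hθ : Aᵀ *ᵥ θ = 0) (lam : n → ℝ) :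
    (A *ᵥ lam) ⬝ᵥ θ = 0 := by
  rw [dotProduct_comm, dotProduct_mulVec, ← mulVec_transpose, hθ, zero_dotProduct]

lemma Matrix.exists_mulVec_mem_of_forall_dotProduct_nonneg {m n : Type*} [Fintype m] [Fintype n]
    (A : Matrix m n ℝ) {B : Set (m → ℝ)} (hBc : Convex ℝ B) (hBk : IsCompact B)
    (h : ∀ d, Aᵀ *ᵥ d = 0 → ∃ g ∈ B, 0 ≤ g ⬝ᵥ d) : ∃ lam, A *ᵥ lam ∈ B := by
  classical
  by_contra! hB
  have hdisj : Disjoint B (LinearMap.range A.mulVecLin) := by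
    rw [Set.disjoint_left]
    rintro _ hg ⟨lam, rfl⟩
    exact hB lam hg
  obtain ⟨φ, u, v, hφB, huv, hφV⟩ := geometric_hahn_banach_compact_closed hBc hBk
    (Submodule.convex _) (Submodule.closed_of_finiteDimensional _) hdisj
  have hv : v < 0 := by simpa using hφV 0 (Submodule.zero_mem _)
  -- `φ` is bounded below on the subspace `range A`, hence vanishes there.
  have hφA : ∀ lam, φ (A *ᵥ lam) = 0 := by
    intro lam
    by_contra hne
    have := hφV (A *ᵥ ((v / φ (A *ᵥ lam)) • lam)) ⟨_, rfl⟩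
    rw [mulVec_smul, map_smul, smul_eq_mul, div_mul_cancel₀ _ hne] at this
    exact this.false
  set d : m → ℝ := fun i => φ fun j => if i = j then 1 else 0
  have hφd : ∀ x, φ x = x ⬝ᵥ d := (φ : (m → ℝ) →ₗ[ℝ] ℝ).pi_apply_eq_sum_univ
  have hd : Aᵀ *ᵥ d = 0 := by
    have := hφA (Aᵀ *ᵥ d)
    rwa [hφd, dotProduct_comm, dotProduct_mulVec, ← mulVec_transpose, dotProduct_self_eq_zero]
      at this
  obtain ⟨g, hg, hgd⟩ := h d hd
  linarith [hφB g hg, hφd g]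

theorem exists_mulVec_subgradient_of_isMinOn {m n : Type*} [Fintype m] [Fintype n]
    {f : m → ℝ → ℝ} (hf : ∀ i, ConvexOn ℝ univ (f i)) (A : Matrix m n ℝ) {θ : m → ℝ}
    (hθ : Aᵀ *ᵥ θ = 0) (hmin : IsMinOn (fun θ => ∑ i, f i (θ i)) {θ | Aᵀ *ᵥ θ = 0} θ) :
    ∃ lam, ∀ i x, f i (θ i) + (A *ᵥ lam) i * (x - θ i) ≤ f i x := by
  set l : m → ℝ := fun i => derivWithin (f i) (Iio (θ i)) (θ i)
  set r : m → ℝ := fun i => derivWithin (f i) (Ioi (θ i)) (θ i)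
  have hlr : ∀ i, l i ≤ r i := fun i =>
    (hf i).leftDeriv_le_rightDeriv_of_mem_interior (by simp)
  obtain ⟨lam, hlam⟩ : ∃ lam, A *ᵥ lam ∈ univ.pi fun i => Icc (l i) (r i) := by
    refine A.exists_mulVec_mem_of_forall_dotProduct_nonneg
      (convex_pi fun i _ => convex_Icc _ _) (isCompact_univ_pi fun i => isCompact_Icc)
      fun d hd => ⟨fun i => if 0 ≤ d i then r i else l i, fun i _ => ?_, ?_⟩
    · dsimp only
      split_ifs
      exacts [⟨hlr i, le_rfl⟩, ⟨le_rfl, hlr i⟩]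
    · refine (HasDerivWithinAt.sum fun i _ =>
        (hf i).hasDerivWithinAt_comp_add_mul (θ i) (d i)).nonneg_of_forall_gt_le fun t _ => ?_
      have := hmin (show Aᵀ *ᵥ (θ + t • d) = 0 by simp [mulVec_add, mulVec_smul, hθ, hd])
      simpa using this
  exact ⟨lam, fun i => (hf i).add_mul_sub_le_of_leftDeriv_le_of_le_rightDeriv
    (hlam i trivial).1 (hlam i trivial).2⟩

lemma iSup_mul_sub_eq_of_forall_add_mul_sub_le {f : ℝ → ℝ} {g t : ℝ}
    (hg : ∀ x, f t + g * (x - t) ≤ f x) : ⨆ x, (g * x - f x) = g * t - f t := by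
  have hle : ∀ x, g * x - f x ≤ g * t - f t := fun x => by linarith [hg x]
  exact le_antisymm (ciSup_le hle) (le_ciSup ⟨_, forall_mem_range.2 hle⟩ t)

theorem stmt15_general (n E : ℕ)
    (A : Matrix (Fin n) (Fin E) ℝ)
    (f : Fin n → ℝ → ℝ) (μ : Fin n → ℝ) (hμ : ∀ i, 0 < μ i)
    (hconv : ∀ i, ConvexOn ℝ Set.univ (f i))
    (hstrong : ∀ i, ConvexOn ℝ Set.univ (fun x => f i x - (μ i / 2) * x ^ 2)) :
    sInf {v : ℝ | ∃ θ : Fin n → ℝ, Aᵀ.mulVec θ = 0 ∧ v = ∑ i, f i (θ i)}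
      = - sInf {v : ℝ | ∃ lam : Fin E → ℝ,
          v = ∑ i, ⨆ x : ℝ, (A.mulVec lam i * x - f i x)} := by
  choose a b hq using fun i => (hstrong i).exists_quadratic_le
  set F := fun θ : Fin n → ℝ => ∑ i, f i (θ i)
  have hF : Continuous F := continuous_finsetSum _ fun i _ =>
    (continuousOn_univ.mp ((hconv i).continuousOn isOpen_univ)).comp (continuous_apply i)
  have hcoercive : Tendsto F (cocompact _) atTop := tendsto_sum_apply_cocompact_atTop
    (fun i => bddBelow_range_of_quadratic_le (hμ i) (hq i))
    (fun i => tendsto_cocompact_atTop_of_quadratic_le (hμ i) (hq i))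
  obtain ⟨θ, hθ, hmin⟩ := hF.continuousOn.exists_isMinOn'
    (isClosed_eq (Aᵀ.mulVecLin.continuous_of_finiteDimensional) continuous_const)
    (mulVec_zero Aᵀ) ((hcoercive.eventually_ge_atTop (F 0)).filter_mono inf_le_left)
  obtain ⟨lam, hlam⟩ := exists_mulVec_subgradient_of_isMinOn hconv A hθ hmin
  have hprimal : IsLeast {v : ℝ | ∃ θ : Fin n → ℝ, Aᵀ.mulVec θ = 0 ∧ v = ∑ i, f i (θ i)} (F θ) :=
    ⟨⟨θ, hθ, rfl⟩, by rintro _ ⟨θ', hθ', rfl⟩; exact hmin hθ'⟩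
  have hdual : IsLeast {v : ℝ | ∃ lam : Fin E → ℝ,
      v = ∑ i, ⨆ x : ℝ, (A.mulVec lam i * x - f i x)} (-F θ) := by
    have hvalue : ∀ lam', -F θ = ∑ i, ((A *ᵥ lam') i * θ i - f i (θ i)) := fun lam' => by
      rw [Finset.sum_sub_distrib, ← dotProduct, A.mulVec_dotProduct_eq_zero hθ, zero_sub]
    refine ⟨⟨lam, ?_⟩, ?_⟩
    · simp_rw [iSup_mul_sub_eq_of_forall_add_mul_sub_le (hlam _), hvalue lam]
    · rintro _ ⟨lam', rfl⟩
      rw [hvalue lam']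
      exact Finset.sum_le_sum fun i _ =>
        le_ciSup (bddAbove_range_mul_sub_of_quadratic_le (hμ i) (hq i) _) (θ i)
  rw [hprimal.csInf_eq, hdual.csInf_eq, neg_neg]

/-- Consensus duality: strong duality between the consensus-constrained
primal problem `inf { Σᵢ fᵢ(θᵢ) : Aᵀ θ = 0 }` and the dual problem
`-inf_λ Σᵢ fᵢ*((A λ)ᵢ)` in the edge variables, for an oriented incidence matrix `A` of a
graph and convex, strongly convex local functions `fᵢ`. -/
theorem stmt15 (n E : ℕ)
    (A : Matrix (Fin n) (Fin E) ℝ)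
    (hA : ∀ ℓ : Fin E, ∃ i j : Fin n, i ≠ j ∧ A i ℓ = 1 ∧ A j ℓ = -1 ∧
      ∀ k : Fin n, k ≠ i → k ≠ j → A k ℓ = 0)
    (f : Fin n → ℝ → ℝ) (μ : Fin n → ℝ) (hμ : ∀ i, 0 < μ i)
    (hconv : ∀ i, ConvexOn ℝ Set.univ (f i))
    (hstrong : ∀ i, ConvexOn ℝ Set.univ (fun x => f i x - (μ i / 2) * x ^ 2)) :
    sInf {v : ℝ | ∃ θ : Fin n → ℝ, Aᵀ.mulVec θ = 0 ∧ v = ∑ i, f i (θ i)}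
      = - sInf {v : ℝ | ∃ lam : Fin E → ℝ,
          v = ∑ i, ⨆ x : ℝ, (A.mulVec lam i * x - f i x)} :=
  stmt15_general n E A f μ hμ hconv hstrong
end
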